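/- arXiv:2512.11379 — 7 statements merged into one kernel-verified Lean document; each statement's English description precedes it below -/
import Mathlib

section
/- Let i, j ∈ ℕ₀ with i ≡ j (mod p−1) and let γ ∈ Ĥ_i. Then γ ∈ Ĥ_j; that is, the additive subgroup of O generated by {γ(x, y) : x, y ∈ 𝔭^j} equals 𝔭^{2j+1}. -/
set_option synthInstance.maxHeartbeats 1000000
set_option maxHeartbeats 1000000

namespace MaximalClassFrame

variable (p : ℕ) [Fact p.Prime]
variable (K : Type) [Field K] [Algebra ℚ_[p] K] [Algebra ℤ_[p] K]
  [IsScalarTower ℤ_[p] ℚ_[p] K]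

/-- The maximal order `𝒪` of `K`: the integral closure of `ℤ_p` in `K`. -/
noncomputable abbrev 𝒪 : Subalgebra ℤ_[p] K := integralClosure ℤ_[p] K

variable (θ : 𝒪 p K)

/-- The maximal ideal `𝔭` of `𝒪`, generated by `κ = θ - 1`. -/
noncomputable def pid : Ideal (𝒪 p K) := Ideal.span {θ - 1}

/-- A `ℤ_p`-bilinear map `γ : 𝒪 × 𝒪 → 𝒪` is `P`-equivariant if it is
alternating and satisfies `γ(θx, θy) = θ·γ(x,y)` for all `x, y`. -/
def IsPEquivariant (γ : 𝒪 p K →ₗ[ℤ_[p]] 𝒪 p K →ₗ[ℤ_[p]] 𝒪 p K) : Prop :=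
  (∀ x, γ x x = 0) ∧ ∀ x y, γ (θ * x) (θ * y) = θ * γ x y

/-- `γ ∈ Ĥ_i`: the additive subgroup of `𝒪` generated by
`{γ(x,y) : x, y ∈ 𝔭^i}` equals `𝔭^(2i+1)`. -/
def InHhat (i : ℕ) (γ : 𝒪 p K →ₗ[ℤ_[p]] 𝒪 p K →ₗ[ℤ_[p]] 𝒪 p K) : Prop :=
  Submodule.span ℤ (Set.image2 (fun x y => γ x y)
      ((pid p K θ ^ i : Ideal (𝒪 p K)) : Set (𝒪 p K))
      ((pid p K θ ^ i : Ideal (𝒪 p K)) : Set (𝒪 p K)))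
    = (pid p K θ ^ (2 * i + 1)).restrictScalars ℤ

/-- `p` is associated to `(θ-1)^(p-1)` in `𝒪`; at the level of ideals,
`(p) = 𝔭^(p-1)`. -/
lemma span_p_eq (hθ : IsPrimitiveRoot (θ : K) p) :
    Ideal.span {((p : ℕ) : 𝒪 p K)} = pid p K θ ^ (p - 1) := by
  have hpP : p.Prime := Fact.out
  have hθO : IsPrimitiveRoot θ p :=
    IsPrimitiveRoot.of_map_of_injective (f := (𝒪 p K).val) hθ Subtype.val_injective
  haveI : NeZero p := ⟨hpP.ne_zero⟩
  obtain ⟨n, hn⟩ : ∃ n, p = n + 1 := ⟨p - 1, (Nat.succ_pred_eq_of_pos hpP.pos).symm⟩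
  have hn' : p - 1 = n := by omega
  -- each θ^(k+1) - 1 is associated to θ - 1
  have hfac : ∀ k ∈ Finset.range n, Associated (θ - 1) (θ ^ (k + 1) - 1) := by
    intro k hk
    refine associated_of_dvd_dvd ?_ ?_
    · simpa using sub_dvd_pow_sub_pow θ 1 (k + 1)
    · have hcop : (k + 1).Coprime p := by
        rw [Nat.coprime_comm, hpP.coprime_iff_not_dvd]
        intro hdvd
        have := Finset.mem_range.mp hk
        have := Nat.le_of_dvd (Nat.succ_pos k) hdvd
        omega
      obtain ⟨m, -, hm⟩ :=
        (hθO.pow_of_coprime (k + 1) hcop).eq_pow_of_pow_eq_one hθO.pow_eq_one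
      calc θ ^ (k + 1) - 1 ∣ (θ ^ (k + 1)) ^ m - 1 ^ m :=
            sub_dvd_pow_sub_pow _ _ m
        _ = θ - 1 := by rw [hm, one_pow]
  have hprod : Associated ((θ - 1) ^ n) (∏ k ∈ Finset.range n, (θ ^ (k + 1) - 1)) := by
    have := Associated.prod (Finset.range n) (fun _ => θ - 1)
      (fun k => θ ^ (k + 1) - 1) hfac
    simpa using this
  have horder : (-1 : 𝒪 p K) ^ n * ∏ k ∈ Finset.range n, (θ ^ (k + 1) - 1)
      = ((p : ℕ) : 𝒪 p K) := by
    have := (show IsPrimitiveRoot θ (n + 1) from hn ▸ hθO).prod_pow_sub_one_eq_order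
    rw [this]
    push_cast [hn]
    ring
  have hassoc2 : Associated (∏ k ∈ Finset.range n, (θ ^ (k + 1) - 1))
      (((p : ℕ) : 𝒪 p K)) := by
    refine ⟨(-1 : (𝒪 p K)ˣ) ^ n, ?_⟩
    rw [← horder]
    push_cast
    ring
  have hassoc : Associated ((θ - 1) ^ (p - 1)) ((p : ℕ) : 𝒪 p K) := by
    rw [hn']
    exact hprod.trans hassoc2
  rw [pid, Ideal.span_singleton_pow, Ideal.span_singleton_eq_span_singleton]
  exact hassoc.symm

lemma coe_span_singleton_mul (a : 𝒪 p K) (J : Ideal (𝒪 p K)) :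
    ((Ideal.span {a} * J : Ideal (𝒪 p K)) : Set (𝒪 p K))
      = (fun z => a * z) '' (J : Set (𝒪 p K)) := by
  ext x
  simp [Ideal.mem_span_singleton_mul, Set.mem_image]

/-- One step of periodicity: `Ĥ_(i + (p-1)) = Ĥ_i`. -/
lemma InHhat_step (hθ : IsPrimitiveRoot (θ : K) p)
    (γ : 𝒪 p K →ₗ[ℤ_[p]] 𝒪 p K →ₗ[ℤ_[p]] 𝒪 p K) (i : ℕ) :
    InHhat p K θ (i + (p - 1)) γ ↔ InHhat p K θ i γ := by
  have hpP : p.Prime := Fact.out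
  haveI : CharZero K := charZero_of_injective_algebraMap (algebraMap ℚ_[p] K).injective
  set c : 𝒪 p K := ((p : ℕ) : 𝒪 p K) ^ 2 with hc_def
  have hc : c ≠ 0 := by
    intro h
    apply_fun (Subalgebra.val _) at h
    simp only [map_pow, map_natCast, map_zero] at h
    exact (Nat.cast_ne_zero.mpr hpP.ne_zero : ((p : ℕ) : K) ≠ 0) (pow_eq_zero_iff (by norm_num) |>.mp h)
  set m : 𝒪 p K →ₗ[ℤ] 𝒪 p K := LinearMap.mulLeft ℤ c with hm_def
  have hminj : Function.Injective m := mul_right_injective₀ hc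
  -- bilinearity over ℕ-scalars
  have key : ∀ x y : 𝒪 p K,
      γ (((p : ℕ) : 𝒪 p K) * x) (((p : ℕ) : 𝒪 p K) * y) = c * γ x y := by
    intro x y
    have hx : ((p : ℕ) : 𝒪 p K) * x = (p : ℕ) • x := by simp [nsmul_eq_mul]
    have hy : ((p : ℕ) : 𝒪 p K) * y = (p : ℕ) • y := by simp [nsmul_eq_mul]
    calc γ (((p : ℕ) : 𝒪 p K) * x) (((p : ℕ) : 𝒪 p K) * y)
        = (p : ℕ) • ((p : ℕ) • γ x y) := by
            rw [hx, hy, map_nsmul, map_nsmul, LinearMap.smul_apply]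
      _ = ((p : ℕ) * (p : ℕ)) • γ x y := by rw [smul_smul]
      _ = c * γ x y := by
            rw [nsmul_eq_mul, hc_def]
            push_cast
            ring
  -- ideal-power decompositions
  have hPi : pid p K θ ^ (i + (p - 1))
      = Ideal.span {((p : ℕ) : 𝒪 p K)} * pid p K θ ^ i := by
    rw [pow_add, span_p_eq p K θ hθ, mul_comm]
  have hP2 : pid p K θ ^ (2 * (i + (p - 1)) + 1)
      = Ideal.span {c} * pid p K θ ^ (2 * i + 1) := by
    have h2 : 2 * (i + (p - 1)) + 1 = (2 * i + 1) + ((p - 1) + (p - 1)) := by ring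
    rw [h2, pow_add (pid p K θ) (2 * i + 1), pow_add (pid p K θ) (p - 1),
      ← span_p_eq p K θ hθ, Ideal.span_singleton_mul_span_singleton, mul_comm,
      hc_def, sq]
  -- the generating set at level i + (p-1) is c • (generating set at level i)
  have hA : Set.image2 (fun x y => γ x y)
        ((pid p K θ ^ (i + (p - 1)) : Ideal (𝒪 p K)) : Set (𝒪 p K))
        ((pid p K θ ^ (i + (p - 1)) : Ideal (𝒪 p K)) : Set (𝒪 p K))
      = (fun z => c * z) '' Set.image2 (fun x y => γ x y)
        ((pid p K θ ^ i : Ideal (𝒪 p K)) : Set (𝒪 p K))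
        ((pid p K θ ^ i : Ideal (𝒪 p K)) : Set (𝒪 p K)) := by
    rw [hPi, coe_span_singleton_mul, Set.image2_image_left, Set.image2_image_right,
      Set.image_image2]
    exact Set.image2_congr fun x _ y _ => key x y
  -- submodule-level consequences
  have hAmap : Submodule.span ℤ (Set.image2 (fun x y => γ x y)
        ((pid p K θ ^ (i + (p - 1)) : Ideal (𝒪 p K)) : Set (𝒪 p K))
        ((pid p K θ ^ (i + (p - 1)) : Ideal (𝒪 p K)) : Set (𝒪 p K)))
      = Submodule.map m (Submodule.span ℤ (Set.image2 (fun x y => γ x y)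
        ((pid p K θ ^ i : Ideal (𝒪 p K)) : Set (𝒪 p K))
        ((pid p K θ ^ i : Ideal (𝒪 p K)) : Set (𝒪 p K)))) := by
    rw [hA, Submodule.map_span]
    rfl
  have hBmap : (pid p K θ ^ (2 * (i + (p - 1)) + 1)).restrictScalars ℤ
      = Submodule.map m ((pid p K θ ^ (2 * i + 1)).restrictScalars ℤ) := by
    apply SetLike.ext
    intro x
    rw [Submodule.restrictScalars_mem, hP2]
    simp only [Submodule.mem_map, Submodule.restrictScalars_mem,
      Ideal.mem_span_singleton_mul]
    constructor
    · rintro ⟨z, hz, rfl⟩; exact ⟨z, hz, rfl⟩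
    · rintro ⟨z, hz, rfl⟩; exact ⟨z, hz, rfl⟩
  unfold InHhat
  rw [hAmap, hBmap]
  exact ⟨fun h => Submodule.map_injective_of_injective hminj h, fun h => by rw [h]⟩

/-- If `i ≡ j (mod p−1)` and `γ ∈ Ĥ_i`, then `γ ∈ Ĥ_j`. -/
theorem frame_Hhat_mod_period (hp : 5 ≤ p) (hθ : IsPrimitiveRoot (θ : K) p)
    (hgen : Algebra.adjoin ℚ_[p] {(θ : K)} = ⊤)
    (γ : 𝒪 p K →ₗ[ℤ_[p]] 𝒪 p K →ₗ[ℤ_[p]] 𝒪 p K) (hγ : IsPEquivariant p K θ γ)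
    (i j : ℕ) (hij : i ≡ j [MOD p - 1]) (hi : InHhat p K θ i γ) :
    InHhat p K θ j γ := by
  have iter : ∀ (k a : ℕ), InHhat p K θ a γ ↔ InHhat p K θ (a + k * (p - 1)) γ := by
    intro k
    induction k with
    | zero => simp
    | succ k ih =>
        intro a
        have : a + (k + 1) * (p - 1) = (a + k * (p - 1)) + (p - 1) := by ring
        rw [this, InHhat_step p K θ hθ γ, ← ih a]
  rcases le_total i j with h | h
  · obtain ⟨k, hk⟩ := (Nat.modEq_iff_dvd' h).mp hij
    have hk' : j - i = k * (p - 1) := by rw [hk, Nat.mul_comm]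
    have hj : j = i + k * (p - 1) := by omega
    rw [hj]
    exact (iter k i).mp hi
  · obtain ⟨k, hk⟩ := (Nat.modEq_iff_dvd' h).mp hij.symm
    have hk' : i - j = k * (p - 1) := by rw [hk, Nat.mul_comm]
    have hi' : i = j + k * (p - 1) := by omega
    rw [hi'] at hi
    exact (iter k j).mpr hi

end MaximalClassFrame
end

section
/- Let i, j ∈ ℕ₀, let 2 ≤ a ≤ (p−1)/2, and let o_a denote the multiplicative order of a·(1−a)^{−1} in the group of units of ℤ/pℤ. Then the ideal of O generated by {ϑ_a(x, y) : x ∈ 𝔭^i, y ∈ 𝔭^j} equals 𝔭^{i+j+ε(i,j)}, where ε(i,j) = 1 if o_a divides i−j and ε(i,j) = 0 otherwise. -/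
set_option synthInstance.maxHeartbeats 1000000
set_option maxHeartbeats 1000000

namespace MaximalClassFrame

variable (p : ℕ) [Fact p.Prime]
variable (K : Type) [Field K] [Algebra ℚ_[p] K] [Algebra ℤ_[p] K]
  [IsScalarTower ℤ_[p] ℚ_[p] K]

variable (θ : 𝒪 p K)

variable (σ : ℤ → (K →ₐ[ℚ_[p]] K))

/-- The map `ϑ_a(x,y) = σ_a(x)·σ_{1-a}(y) − σ_{1-a}(x)·σ_a(y)` on `K × K`. -/
noncomputable def thetaMap (a : ℤ) : K → K → K :=
  fun x y => σ a x * σ (1 - a) y - σ (1 - a) x * σ a y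

/-!
Write `κ = θ - 1`, so that `𝔭 ^ i = (κ ^ i)`. If `σ θ = θ ^ c` then `σ κ = κ * e_c` with
`e_c = 1 + θ + ⋯ + θ ^ (c - 1) ≡ c (mod 𝔭)`, hence
`ϑ_a (κ^i u, κ^j v) = κ^(i+j) (e_a^i e_{1-a}^j σ_a u σ_{1-a} v - e_{1-a}^i e_a^j σ_{1-a} u σ_a v)`.
The minimal polynomial of `κ` is Eisenstein at `p`, so `𝒪 = ℤ_p[κ]` and every `σ_c` acts trivially
on `𝒪/𝔭`; the second factor is therefore `≡ (a^i (1-a)^j - (1-a)^i a^j) u v (mod 𝔭)`, and this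
residue vanishes exactly when `o_a ∣ i - j`. If it does not, `ϑ_a (κ^i, κ^j)` is `κ^(i+j)` times a
unit. If it does, every value lies in `𝔭^(i+j+1)`, while `ϑ_a (κ^i, κ^(j+1))` is `κ^(i+j+1)` times a
unit, its cofactor being `≡ a^i (1-a)^j (1-2a)`. Units are detected modulo `𝔭` because `𝔭` lies in
every maximal ideal of `𝒪`.
-/

open Polynomial

section CrossDet

variable {R : Type*} [CommRing R]

def crossDet (f g : R →+* R) (x y : R) : R := f x * g y - g x * f y

theorem _root_.Ideal.span_eq_span_singleton_of_subset {S : Set R} {c w : R}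
    (hS : S ⊆ Ideal.span {c}) (hw : IsUnit w) (hcw : c * w ∈ S) :
    Ideal.span S = Ideal.span {c} :=
  le_antisymm (Ideal.span_le.mpr hS) <| by
    rw [← Ideal.span_singleton_mul_right_unit hw c]
    exact Ideal.span_mono (Set.singleton_subset_iff.mpr hcw)

variable {f g : R →+* R} {κ e e' : R}

theorem crossDet_pow_mul_pow_mul (hf : f κ = κ * e) (hg : g κ = κ * e') (i j : ℕ) (u v : R) :
    crossDet f g (κ ^ i * u) (κ ^ j * v) =
      κ ^ (i + j) * (e ^ i * e' ^ j * (f u * g v) - e' ^ i * e ^ j * (g u * f v)) := by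
  simp only [crossDet, map_mul, map_pow, hf, hg]
  ring

theorem crossDet_pow_pow (hf : f κ = κ * e) (hg : g κ = κ * e') (i k : ℕ) :
    crossDet f g (κ ^ i) (κ ^ k) = κ ^ (i + k) * (e ^ i * e' ^ k - e' ^ i * e ^ k) := by
  simpa using crossDet_pow_mul_pow_mul hf hg i k 1 1

theorem crossDet_mem_pow (hf : f κ = κ * e) (hg : g κ = κ * e') {i j : ℕ} {x y : R}
    (hx : x ∈ Ideal.span {κ} ^ i) (hy : y ∈ Ideal.span {κ} ^ j) :
    crossDet f g x y ∈ Ideal.span {κ} ^ (i + j) := by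
  simp only [Ideal.span_singleton_pow, Ideal.mem_span_singleton] at hx hy ⊢
  obtain ⟨u, rfl⟩ := hx
  obtain ⟨v, rfl⟩ := hy
  rw [crossDet_pow_mul_pow_mul hf hg]
  exact dvd_mul_right _ _

theorem crossDet_mem_pow_succ (hf : f κ = κ * e) (hg : g κ = κ * e')
    (hfκ : ∀ u, f u - u ∈ Ideal.span {κ}) (hgκ : ∀ u, g u - u ∈ Ideal.span {κ}) {i j : ℕ}
    (hres : e ^ i * e' ^ j - e' ^ i * e ^ j ∈ Ideal.span {κ}) {x y : R}
    (hx : x ∈ Ideal.span {κ} ^ i) (hy : y ∈ Ideal.span {κ} ^ j) :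
    crossDet f g x y ∈ Ideal.span {κ} ^ (i + j + 1) := by
  simp only [Ideal.span_singleton_pow, Ideal.mem_span_singleton] at hx hy ⊢
  obtain ⟨u, rfl⟩ := hx
  obtain ⟨v, rfl⟩ := hy
  rw [crossDet_pow_mul_pow_mul hf hg, pow_succ]
  refine mul_dvd_mul_left _ (Ideal.mem_span_singleton.mp (Ideal.Quotient.eq_zero_iff_mem.mp ?_))
  have hfu (u) := Ideal.Quotient.eq.mpr (hfκ u)
  have hgu (u) := Ideal.Quotient.eq.mpr (hgκ u)
  have hres' := Ideal.Quotient.eq_zero_iff_mem.mpr hres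
  simp only [map_sub, map_mul, map_pow, hfu, hgu] at hres' ⊢
  linear_combination (Ideal.Quotient.mk _ u * Ideal.Quotient.mk _ v) * hres'

theorem span_crossDet_eq_pow (hf : f κ = κ * e) (hg : g κ = κ * e') {i j : ℕ}
    (hunit : IsUnit (e ^ i * e' ^ j - e' ^ i * e ^ j)) :
    Ideal.span (Set.image2 (crossDet f g) ↑(Ideal.span {κ} ^ i) ↑(Ideal.span {κ} ^ j))
      = Ideal.span {κ} ^ (i + j) := by
  refine (Ideal.span_eq_span_singleton_of_subset ?_ hunit ?_).trans
    (Ideal.span_singleton_pow κ _).symm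
  · rintro _ ⟨x, hx, y, hy, rfl⟩
    rw [← Ideal.span_singleton_pow]
    exact crossDet_mem_pow hf hg hx hy
  · rw [← crossDet_pow_pow hf hg]
    exact Set.mem_image2_of_mem (Ideal.pow_mem_pow (Ideal.mem_span_singleton_self κ) i)
      (Ideal.pow_mem_pow (Ideal.mem_span_singleton_self κ) j)

theorem span_crossDet_eq_pow_succ (hf : f κ = κ * e) (hg : g κ = κ * e')
    (hfκ : ∀ u, f u - u ∈ Ideal.span {κ}) (hgκ : ∀ u, g u - u ∈ Ideal.span {κ}) {i j : ℕ}
    (hres : e ^ i * e' ^ j - e' ^ i * e ^ j ∈ Ideal.span {κ})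
    (hunit : IsUnit (e ^ i * e' ^ (j + 1) - e' ^ i * e ^ (j + 1))) :
    Ideal.span (Set.image2 (crossDet f g) ↑(Ideal.span {κ} ^ i) ↑(Ideal.span {κ} ^ j))
      = Ideal.span {κ} ^ (i + j + 1) := by
  refine (Ideal.span_eq_span_singleton_of_subset ?_ hunit ?_).trans
    (Ideal.span_singleton_pow κ _).symm
  · rintro _ ⟨x, hx, y, hy, rfl⟩
    rw [← Ideal.span_singleton_pow]
    exact crossDet_mem_pow_succ hf hg hfκ hgκ hres hx hy
  · rw [add_assoc, ← crossDet_pow_pow hf hg]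
    exact Set.mem_image2_of_mem (Ideal.pow_mem_pow (Ideal.mem_span_singleton_self κ) i)
      (Ideal.pow_le_pow_right j.le_succ (Ideal.pow_mem_pow (Ideal.mem_span_singleton_self κ) _))

end CrossDet

theorem orderOf_mul_inv_dvd_sub_iff {F : Type*} [Field F] {A B : F} (hA : A ≠ 0) (hB : B ≠ 0)
    (i j : ℕ) : (orderOf (A * B⁻¹) : ℤ) ∣ (i : ℤ) - (j : ℤ) ↔ A ^ i * B ^ j = B ^ i * A ^ j := by
  lift A to Fˣ using hA.isUnit
  lift B to Fˣ using hB.isUnit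
  rw [← Units.val_inv_eq_inv_val, ← Units.val_mul, orderOf_units,
    orderOf_dvd_sub_iff_zpow_eq_zpow, zpow_natCast, zpow_natCast, ← div_eq_mul_inv, div_pow,
    div_pow, div_eq_div_iff_mul_eq_mul, mul_comm (A ^ j), ← Units.val_inj]
  push_cast
  rfl

theorem pow_mul_pow_succ_sub_ne_zero {F : Type*} [Field F] {A B : F} (hA : A ≠ 0) (hB : B ≠ 0)
    (hAB : A ≠ B) {i j : ℕ} (h : A ^ i * B ^ j = B ^ i * A ^ j) :
    A ^ i * B ^ (j + 1) - B ^ i * A ^ (j + 1) ≠ 0 := by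
  have : A ^ i * B ^ (j + 1) - B ^ i * A ^ (j + 1) = A ^ i * B ^ j * (B - A) := by
    linear_combination A * h
  rw [this]
  exact mul_ne_zero (mul_ne_zero (pow_ne_zero i hA) (pow_ne_zero j hB)) (sub_ne_zero.mpr hAB.symm)

theorem sub_mem_of_mem_adjoin_singleton {R A : Type*} [CommRing R] [CommRing A] [Algebra R A]
    {I : Ideal A} (f : A →ₐ[R] A) {x : A} (hx : f x - x ∈ I) {u : A}
    (hu : u ∈ Algebra.adjoin R {x}) : f u - u ∈ I := by
  rw [Algebra.adjoin_singleton_eq_range_aeval] at hu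
  obtain ⟨q, rfl⟩ := hu
  rw [← Ideal.Quotient.eq] at hx ⊢
  change Ideal.Quotient.mkₐ R I (f (aeval x q)) = Ideal.Quotient.mkₐ R I (aeval x q) at ⊢
  rw [← aeval_algHom_apply, ← aeval_algHom_apply, ← aeval_algHom_apply]
  exact congrArg (aeval · q) hx

theorem adjoin_sub_one_eq_top {F L : Type*} [Field F] [CommRing L] [Algebra F L] {ζ : L}
    (hgen : Algebra.adjoin F {ζ} = ⊤) : Algebra.adjoin F {ζ - 1} = ⊤ := by
  rw [← top_le_iff, ← hgen, Algebra.adjoin_le_iff, Set.singleton_subset_iff]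
  simpa using add_mem (Algebra.self_mem_adjoin_singleton F (ζ - 1)) (one_mem _)

section

variable {p}

theorem cyclotomic_comp_X_add_one_monic (n : ℕ) (R : Type*) [CommRing R] [Nontrivial R] :
    ((cyclotomic n R).comp (X + 1)).Monic := by
  rw [← C_1]
  exact (cyclotomic.monic n R).comp (monic_X_add_C 1) (by rw [natDegree_X_add_C]; simp)

theorem cyclotomic_comp_X_add_one_isEisensteinAt_of_prime {R : Type*} [CommRing R] [IsDomain R]
    (hp : Prime (p : R)) :
    ((cyclotomic p R).comp (X + 1)).IsEisensteinAt (Ideal.span {(p : R)}) := by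
  have hmap : (cyclotomic p R).comp (X + 1) =
      ((cyclotomic p ℤ).comp (X + 1)).map (Int.castRingHom R) := by
    simp [Polynomial.map_comp]
  refine (cyclotomic_comp_X_add_one_monic p R).isEisensteinAt_of_mem_of_notMem
    (Ideal.span_singleton_ne_top hp.not_isUnit) (fun {n} hn => ?_) ?_
  · rw [hmap, (cyclotomic_comp_X_add_one_monic p ℤ).natDegree_map] at hn
    rw [hmap, coeff_map, Ideal.mem_span_singleton]
    simpa using _root_.map_dvd (Int.castRingHom R)
      (Ideal.mem_span_singleton.mp ((cyclotomic_comp_X_add_one_isEisensteinAt p).mem hn))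
  · rw [coeff_zero_eq_eval_zero, eval_comp, eval_add, eval_X, eval_one, zero_add,
      eval_one_cyclotomic_prime, Ideal.span_singleton_pow, Ideal.mem_span_singleton]
    intro h
    have := (_root_.pow_dvd_pow_iff (n := 2) (m := 1) hp.ne_zero hp.not_isUnit).mp
      (by rwa [pow_one])
    omega

theorem minpoly_sub_one_eq_cyclotomic_comp {R L : Type*} [CommRing R] [IsDomain R]
    [IsIntegrallyClosed R] [CommRing L] [IsDomain L] [Algebra R L] [Module.IsTorsionFree R L]
    (hp : Prime (p : R)) {ζ : L} (hζ : IsPrimitiveRoot ζ p) :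
    minpoly R (ζ - 1) = (cyclotomic p R).comp (X + 1) := by
  have hroot : aeval (ζ - 1) ((cyclotomic p R).comp (X + 1)) = 0 := by
    rw [aeval_comp, map_add, aeval_X, map_one, sub_add_cancel, aeval_def, eval₂_eq_eval_map,
      map_cyclotomic]
    exact hζ.isRoot_cyclotomic (Fact.out : p.Prime).pos
  have hint : IsIntegral R (ζ - 1) := ⟨_, cyclotomic_comp_X_add_one_monic p R, hroot⟩
  have hirr : Irreducible ((cyclotomic p R).comp (X + 1)) :=
    (cyclotomic_comp_X_add_one_isEisensteinAt_of_prime hp).irreducible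
      ((Ideal.span_singleton_prime hp.ne_zero).mpr hp)
      (cyclotomic_comp_X_add_one_monic p R).isPrimitive (by
        rw [natDegree_comp, natDegree_cyclotomic, Nat.totient_prime Fact.out, ← C_1,
          natDegree_X_add_C, mul_one, Nat.sub_pos_iff_lt]
        exact (Fact.out : p.Prime).one_lt)
  exact eq_of_monic_of_associated (minpoly.monic hint) (cyclotomic_comp_X_add_one_monic p R)
    ((minpoly.irreducible hint).associated_of_dvd hirr (minpoly.isIntegrallyClosed_dvd hint hroot))

theorem _root_.IsPrimitiveRoot.zpow_eq_pow_val {F : Type*} [Field F] {ζ : F}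
    (hζ : IsPrimitiveRoot ζ p) (j : ℤ) : ζ ^ j = ζ ^ (j : ZMod p).val := by
  have hdvd : (p : ℤ) ∣ j - ((j : ZMod p).val : ℤ) := by
    rw [← ZMod.intCast_zmod_eq_zero_iff_dvd]
    simp
  calc ζ ^ j = ζ ^ (j - ((j : ZMod p).val : ℤ)) * ζ ^ (((j : ZMod p).val : ℕ) : ℤ) := by
        rw [← zpow_add₀ (hζ.ne_zero (Fact.out : p.Prime).ne_zero), sub_add_cancel]
    _ = ζ ^ (j : ZMod p).val := by rw [(hζ.zpow_eq_one_iff_dvd _).mpr hdvd, one_mul, zpow_natCast]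

theorem natCast_ne_zero_and_one_sub_ne_zero_and_ne_one_sub {a : ℕ} (ha2 : 2 ≤ a)
    (ha : a ≤ (p - 1) / 2) :
    (a : ZMod p) ≠ 0 ∧ 1 - (a : ZMod p) ≠ 0 ∧ (a : ZMod p) ≠ 1 - a := by
  have hne (n : ℕ) (hn0 : 0 < n) (hnp : n < p) : (n : ZMod p) ≠ 0 := by
    rw [Ne, ZMod.natCast_eq_zero_iff]
    exact Nat.not_dvd_of_pos_of_lt hn0 hnp
  refine ⟨hne a (by omega) (by omega), fun h => hne (a - 1) (by omega) (by omega) ?_,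
    fun h => hne (2 * a - 1) (by omega) (by omega) ?_⟩
  · push_cast [Nat.cast_sub (by omega : 1 ≤ a)]
    linear_combination -h
  · push_cast [Nat.cast_sub (by omega : 1 ≤ 2 * a)]
    linear_combination h

end

section

variable {p K θ}

omit [Algebra ℚ_[p] K] [IsScalarTower ℤ_[p] ℚ_[p] K]

theorem natCast_mem_of_isMaximal (M : Ideal (𝒪 p K)) [M.IsMaximal] : (p : 𝒪 p K) ∈ M := by
  have hcomap : M.comap (algebraMap ℤ_[p] (𝒪 p K)) = IsLocalRing.maximalIdeal ℤ_[p] :=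
    IsLocalRing.eq_maximalIdeal (Ideal.isMaximal_comap_of_isIntegral_of_isMaximal M)
  have hp : (p : ℤ_[p]) ∈ M.comap (algebraMap ℤ_[p] (𝒪 p K)) := by
    rw [hcomap, PadicInt.maximalIdeal_eq_span_p]
    exact Ideal.mem_span_singleton_self _
  simpa using hp

theorem pid_le_jacobson (hθ : IsPrimitiveRoot (θ : K) p) : pid p K θ ≤ Ideal.jacobson ⊥ := by
  rw [pid, Ideal.span_le, Set.singleton_subset_iff, SetLike.mem_coe, Ideal.jacobson,
    Submodule.mem_sInf]
  rintro M ⟨-, hM⟩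
  have : CharP (𝒪 p K ⧸ M) p := (CharP.charP_iff_prime_eq_zero Fact.out).mpr <| by
    rw [← map_natCast (Ideal.Quotient.mk M), Ideal.Quotient.eq_zero_iff_mem]
    exact natCast_mem_of_isMaximal M
  have hθp : θ ^ p = 1 := Subtype.ext (by simpa using hθ.pow_eq_one)
  -- Frobenius: `(θ - 1) ^ p = θ ^ p - 1 = 0` in `𝒪 ⧸ M`.
  rw [← Ideal.Quotient.eq_zero_iff_mem, ← pow_eq_zero_iff (Fact.out : p.Prime).ne_zero, map_sub,
    map_one, sub_pow_char, ← map_pow, hθp, map_one, one_pow, sub_self]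

theorem mk_geom_sum (n : ℕ) :
    Ideal.Quotient.mk (pid p K θ) (∑ m ∈ Finset.range n, θ ^ m) = n := by
  have hθ : Ideal.Quotient.mk (pid p K θ) θ = 1 :=
    Ideal.Quotient.eq.mpr (Ideal.mem_span_singleton_self _)
  simp [hθ]

theorem charP_quotient_pid (hθ : IsPrimitiveRoot (θ : K) p) : CharP (𝒪 p K ⧸ pid p K θ) p := by
  have : Nontrivial (𝒪 p K ⧸ pid p K θ) := Ideal.Quotient.nontrivial_iff.mpr fun h =>
    Ideal.jacobson_eq_top_iff.not.mpr bot_ne_top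
      (top_le_iff.mp (h.symm.trans_le (pid_le_jacobson hθ)))
  have hsum : ∑ m ∈ Finset.range p, θ ^ m = 0 :=
    Subtype.ext (by simpa using hθ.geom_sum_eq_zero (Fact.out : p.Prime).one_lt)
  rw [CharP.charP_iff_prime_eq_zero Fact.out, ← mk_geom_sum, hsum, map_zero]

theorem isUnit_of_mk_eq_castHom [CharP (𝒪 p K ⧸ pid p K θ) p] (hθ : IsPrimitiveRoot (θ : K) p)
    {w : 𝒪 p K} {c : ZMod p} (hc : c ≠ 0)
    (hw : Ideal.Quotient.mk (pid p K θ) w = ZMod.castHom (dvd_refl p) _ c) : IsUnit w :=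
  have := isLocalHom_of_le_jacobson_bot _ (pid_le_jacobson hθ)
  (hw ▸ hc.isUnit.map _).of_map

end

section

variable {p K θ σ}

theorem mem_adjoin_sub_one_of_isIntegral {ζ : K} (hζ : IsPrimitiveRoot ζ p)
    (hgen : Algebra.adjoin ℚ_[p] {ζ} = ⊤) {z : K} (hz : IsIntegral ℤ_[p] z) :
    z ∈ Algebra.adjoin ℤ_[p] {ζ - 1} := by
  have hint : IsIntegral ℤ_[p] (ζ - 1) :=
    (IsIntegral.of_pow (Fact.out : p.Prime).pos (by rw [hζ.pow_eq_one]; exact isIntegral_one)).sub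
      isIntegral_one
  let B := PowerBasis.ofAdjoinEqTop hint.tower_top (adjoin_sub_one_eq_top hgen)
  have hB : B.gen = ζ - 1 := PowerBasis.ofAdjoinEqTop_gen _ _
  have : Module.IsTorsionFree ℤ_[p] K := Module.isTorsionFree_iff_algebraMap_injective.mpr <| by
    rw [IsScalarTower.algebraMap_eq ℤ_[p] ℚ_[p] K]
    exact (algebraMap ℚ_[p] K).injective.comp (IsFractionRing.injective ℤ_[p] ℚ_[p])
  have : FiniteDimensional ℚ_[p] K := B.finite
  have hdiscr := Algebra.discr_mul_isIntegral_mem_adjoin ℚ_[p] (hB ▸ hint) hz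
  obtain ⟨d, hd⟩ := IsIntegrallyClosed.isIntegral_iff.mp
    (Algebra.discr_isIntegral ℚ_[p] fun i => B.basis_eq_pow i ▸ (hB ▸ hint).pow _)
  have hd0 : d ≠ 0 := by
    rintro rfl
    exact Algebra.discr_not_zero_of_basis ℚ_[p] B.basis (by simpa using hd.symm)
  -- `d • z ∈ ℤ_p[κ]` with `d` a unit times a power of `p`; Eisenstein at `p` strips that power.
  have hpow : (p : ℤ_[p]) ^ d.valuation • z ∈ Algebra.adjoin ℤ_[p] {B.gen} := by
    obtain ⟨u, hu⟩ : ∃ u : ℤ_[p]ˣ, d = u * (p : ℤ_[p]) ^ d.valuation :=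
      ⟨_, PadicInt.unitCoeff_spec hd0⟩
    have := Subalgebra.smul_mem _ hdiscr ((u⁻¹ : ℤ_[p]ˣ) : ℤ_[p])
    rwa [← hd, algebraMap_smul, smul_smul, hu, Units.inv_mul_cancel_left] at this
  rw [← hB]
  exact mem_adjoin_of_smul_prime_pow_smul_of_minpoly_isEisensteinAt PadicInt.prime_p
    (hB ▸ hint) hz hpow (by
      rw [hB, minpoly_sub_one_eq_cyclotomic_comp PadicInt.prime_p hζ]
      exact cyclotomic_comp_X_add_one_isEisensteinAt_of_prime PadicInt.prime_p)

theorem 𝒪_eq_adjoin_sub_one (hθ : IsPrimitiveRoot (θ : K) p)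
    (hgen : Algebra.adjoin ℚ_[p] {(θ : K)} = ⊤) :
    Algebra.adjoin ℤ_[p] {θ - 1} = (⊤ : Subalgebra ℤ_[p] (𝒪 p K)) := by
  refine eq_top_iff.mpr fun u _ => ?_
  have hu := mem_adjoin_sub_one_of_isIntegral hθ hgen u.2
  rw [show (θ : K) - 1 = (𝒪 p K).val (θ - 1) by simp, ← AlgHom.map_adjoin_singleton] at hu
  obtain ⟨w, hw, hwu⟩ := hu
  rwa [← Subtype.val_injective hwu]

noncomputable def restrictIntegers (f : K →ₐ[ℚ_[p]] K) : 𝒪 p K →ₐ[ℤ_[p]] 𝒪 p K :=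
  (f.restrictScalars ℤ_[p]).mapIntegralClosure

theorem exists_restrictIntegers_sub_one_eq [CharP (𝒪 p K ⧸ pid p K θ) p]
    (hθ : IsPrimitiveRoot (θ : K) p) {f : K →ₐ[ℚ_[p]] K} {j : ℤ} (hj : f θ = (θ : K) ^ j) :
    ∃ e, restrictIntegers f (θ - 1) = (θ - 1) * e ∧
      Ideal.Quotient.mk (pid p K θ) e = ZMod.castHom (dvd_refl p) _ (j : ZMod p) := by
  refine ⟨∑ m ∈ Finset.range (j : ZMod p).val, θ ^ m, Subtype.ext ?_, ?_⟩
  · simp [restrictIntegers, hj, hθ.zpow_eq_pow_val, mul_geom_sum]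
  · rw [mk_geom_sum, ← map_natCast (ZMod.castHom (dvd_refl p) _), ZMod.natCast_zmod_val]

theorem map_sub_self_mem_pid (hθ : IsPrimitiveRoot (θ : K) p)
    (hgen : Algebra.adjoin ℚ_[p] {(θ : K)} = ⊤) (f : 𝒪 p K →ₐ[ℤ_[p]] 𝒪 p K)
    (hf : f (θ - 1) ∈ pid p K θ) (u : 𝒪 p K) : f u - u ∈ pid p K θ :=
  sub_mem_of_mem_adjoin_singleton f (sub_mem hf (Ideal.mem_span_singleton_self _))
    (𝒪_eq_adjoin_sub_one hθ hgen ▸ Algebra.mem_top)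

theorem setOf_thetaMap_eq (a : ℤ) (I J : Ideal (𝒪 p K)) :
    {z : 𝒪 p K | ∃ x ∈ I, ∃ y ∈ J, (z : K) = thetaMap p K σ a x y} =
      Set.image2 (crossDet (restrictIntegers (σ a)) (restrictIntegers (σ (1 - a)))) I J := by
  ext z
  simp [crossDet, restrictIntegers, thetaMap, Subtype.ext_iff, eq_comm]

end

theorem frame_theta_images (hθ : IsPrimitiveRoot (θ : K) p)
    (hgen : Algebra.adjoin ℚ_[p] {(θ : K)} = ⊤)
    (hσ : ∀ j : ℤ, ¬ ((p : ℤ) ∣ j) → σ j (θ : K) = (θ : K) ^ j)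
    (i j : ℕ) (a : ℕ) (ha2 : 2 ≤ a) (ha : a ≤ (p - 1) / 2) :
    Ideal.span {z : 𝒪 p K | ∃ x ∈ pid p K θ ^ i, ∃ y ∈ pid p K θ ^ j,
        (z : K) = thetaMap p K σ (a : ℤ) (x : K) (y : K)}
      = pid p K θ ^ (i + j +
          if ((orderOf ((a : ZMod p) * ((1 : ZMod p) - (a : ZMod p))⁻¹) : ℤ) ∣ (i : ℤ) - (j : ℤ))
          then 1 else 0) := by
  have := charP_quotient_pid hθ
  obtain ⟨hA, hB, hAB⟩ := natCast_ne_zero_and_one_sub_ne_zero_and_ne_one_sub ha2 ha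
  have hσ' (k : ℤ) (hk : (k : ZMod p) ≠ 0) : σ k (θ : K) = (θ : K) ^ k :=
    hσ k fun h => hk ((ZMod.intCast_zmod_eq_zero_iff_dvd k p).mpr h)
  obtain ⟨e, he, hē⟩ := exists_restrictIntegers_sub_one_eq hθ (hσ' a (by simpa using hA))
  obtain ⟨e', he', hē'⟩ := exists_restrictIntegers_sub_one_eq hθ (hσ' (1 - a) (by simpa using hB))
  have hcong {f : 𝒪 p K →ₐ[ℤ_[p]] 𝒪 p K} {c : 𝒪 p K} (hf : f (θ - 1) = (θ - 1) * c) :=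
    map_sub_self_mem_pid hθ hgen f (hf ▸ Ideal.mul_mem_right _ _ (Ideal.mem_span_singleton_self _))
  have hres (k l : ℕ) : Ideal.Quotient.mk (pid p K θ) (e ^ k * e' ^ l - e' ^ k * e ^ l) =
      ZMod.castHom (dvd_refl p) _ ((a : ZMod p) ^ k * (1 - a) ^ l - (1 - a) ^ k * a ^ l) := by
    simp [hē, hē']
  rw [setOf_thetaMap_eq]
  split_ifs with h <;> rw [orderOf_mul_inv_dvd_sub_iff hA hB] at h
  · refine span_crossDet_eq_pow_succ he he' (hcong he) (hcong he') ?_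
      (isUnit_of_mk_eq_castHom hθ (pow_mul_pow_succ_sub_ne_zero hA hB hAB h) (hres i (j + 1)))
    exact Ideal.Quotient.eq_zero_iff_mem.mp
      ((hres i j).trans (by rw [h, sub_self, map_zero]; rfl))
  · exact span_crossDet_eq_pow he he'
      (isUnit_of_mk_eq_castHom hθ (sub_ne_zero.mpr h) (hres i j))

end MaximalClassFrame
end

section
/- For every i ∈ ℕ₀ and every a with 2 ≤ a ≤ (p−1)/2, the map ϑ_a lies in Ĥ_i; that is, the additive subgroup of O generated by {ϑ_a(x, y) : x, y ∈ 𝔭^i} equals 𝔭^{2i+1}. -/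
/-!
Write `κ = θ - 1` and `b = p + 1 - a`, so that `σ_a θ = θ^a` and `σ_{1-a} θ = θ^b`. Since `κ` has
Eisenstein minimal polynomial `Φ_p(X + 1)` over `ℤ_p`, the maximal order is `ℤ_p[θ]`. On it
`σ_a` and `σ_{1-a}` agree modulo `κ` (they agree on `θ`), and both send `κ` to an associate of `κ`;
this puts `ϑ_a(κ^i x, κ^i y)` in `𝔭^{2i+1}`. Conversely `ϑ_a(κ^i, κ^{i+1})` is
`σ_a(κ)^i σ_{1-a}(κ)^i (θ^b - θ^a)`, which is `κ^{2i+1}` times a unit because `b - a = p + 1 - 2a`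
is prime to `p`; and as `θ^a θ^b = θ`, `ϑ_a(c θ^k x, θ^k y) = c θ^k ϑ_a(x, y)` for `c ∈ ℤ_p`, so
sums of such values give all of `𝔭^{2i+1}`.
-/

set_option synthInstance.maxHeartbeats 1000000
set_option maxHeartbeats 1000000

namespace MaximalClassFrame

variable (p : ℕ) [Fact p.Prime]
variable (K : Type) [Field K] [Algebra ℚ_[p] K] [Algebra ℤ_[p] K]
  [IsScalarTower ℤ_[p] ℚ_[p] K]

variable (θ : 𝒪 p K)

variable (σ : ℤ → (K →ₐ[ℚ_[p]] K))

open Polynomial Algebra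

section Eisenstein

variable {R F L : Type*} [CommRing R] [IsDomain R] [IsDiscreteValuationRing R] [Field F]
  [Algebra R F] [IsFractionRing R F] [Field L] [Algebra F L] [Algebra R L] [IsScalarTower R F L]

/-- The discriminant of `B` is a unit times a power of `ϖ`, and Eisenstein divisibility strips
off the powers of `ϖ` one at a time. -/
theorem mem_adjoin_of_isIntegral_of_minpoly_isEisensteinAt [Algebra.IsSeparable F L]
    {ϖ : R} (hϖ : Irreducible ϖ) {B : PowerBasis F L} (hB : IsIntegral R B.gen)
    (hei : (minpoly R B.gen).IsEisensteinAt (Ideal.span {ϖ})) {z : L} (hz : IsIntegral R z) :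
    z ∈ adjoin R {B.gen} := by
  have := B.finite
  have H := discr_mul_isIntegral_mem_adjoin F hB hz
  obtain ⟨d, hd⟩ := IsIntegrallyClosed.isIntegral_iff.1 <|
    Algebra.discr_isIntegral F fun i ↦ B.basis_eq_pow i ▸ hB.pow _
  have hd0 : d ≠ 0 := by
    rintro rfl
    exact Algebra.discr_not_zero_of_basis F B.basis (by rw [← hd, map_zero])
  obtain ⟨n, u, rfl⟩ := IsDiscreteValuationRing.eq_unit_mul_pow_irreducible hd0 hϖ
  rw [← hd, algebraMap_smul, mul_smul] at H
  refine mem_adjoin_of_smul_prime_pow_smul_of_minpoly_isEisensteinAt (K := F) (n := n)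
    hϖ.prime hB hz ?_ hei
  simpa [smul_smul] using Subalgebra.smul_mem _ H (↑u⁻¹ : R)

end Eisenstein

theorem cyclotomic_comp_X_add_one_isEisensteinAt_padicInt :
    ((cyclotomic p ℤ_[p]).comp (X + 1)).IsEisensteinAt (Ideal.span {(p : ℤ_[p])}) := by
  have hmap : ((cyclotomic p ℤ).comp (X + 1)).map (Int.castRingHom ℤ_[p])
      = (cyclotomic p ℤ_[p]).comp (X + 1) := by
    simp [Polynomial.map_comp]
  have hweak := (cyclotomic_comp_X_add_one_isEisensteinAt p).isWeaklyEisensteinAt.map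
    (Int.castRingHom ℤ_[p])
  rw [hmap, Ideal.submodule_span_eq, Ideal.map_span, Set.image_singleton, map_natCast] at hweak
  have hmonic : ((cyclotomic p ℤ_[p]).comp (X + 1)).Monic := by
    simpa using (cyclotomic.monic p ℤ_[p]).comp_X_add_C 1
  refine hmonic.isEisensteinAt_of_mem_of_notMem
    (Ideal.span_singleton_ne_top PadicInt.prime_p.not_isUnit) hweak.mem ?_
  rw [coeff_zero_eq_eval_zero, eval_comp, eval_add, eval_X, eval_one, zero_add,
    eval_one_cyclotomic_prime, Ideal.span_singleton_pow, Ideal.mem_span_singleton, pow_two]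
  rintro ⟨t, ht⟩
  refine PadicInt.prime_p.not_isUnit (IsUnit.of_mul_eq_one (b := t) ?_)
  exact mul_left_cancel₀ PadicInt.prime_p.ne_zero (by linear_combination ht.symm)

theorem minpoly_sub_one_eq_cyclotomic_comp_padicInt {L : Type*} [Field L] [Algebra ℤ_[p] L]
    [Module.IsTorsionFree ℤ_[p] L] {ζ : L} (hζ : IsPrimitiveRoot ζ p) :
    minpoly ℤ_[p] (ζ - 1) = (cyclotomic p ℤ_[p]).comp (X + 1) := by
  have hp := (Fact.out : p.Prime)
  have hmonic : ((cyclotomic p ℤ_[p]).comp (X + 1)).Monic := by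
    simpa using (cyclotomic.monic p ℤ_[p]).comp_X_add_C 1
  have hroot : aeval (ζ - 1) ((cyclotomic p ℤ_[p]).comp (X + 1)) = 0 := by
    rw [aeval_comp, show aeval (ζ - 1) (X + 1 : ℤ_[p][X]) = ζ by simp, aeval_def,
      eval₂_eq_eval_map, map_cyclotomic]
    exact (hζ.isRoot_cyclotomic hp.pos).eq_zero
  have hint : IsIntegral ℤ_[p] (ζ - 1) := ⟨_, hmonic, hroot⟩
  have hirr : Irreducible ((cyclotomic p ℤ_[p]).comp (X + 1)) :=
    (cyclotomic_comp_X_add_one_isEisensteinAt_padicInt p).irreducible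
      ((Ideal.span_singleton_prime PadicInt.prime_p.ne_zero).2 PadicInt.prime_p)
      hmonic.isPrimitive
      (by rw [natDegree_comp, ← C_1, natDegree_X_add_C, natDegree_cyclotomic]; simp [hp.pos])
  exact eq_of_monic_of_associated (minpoly.monic hint) hmonic <|
    (minpoly.irreducible hint).associated_of_dvd hirr (minpoly.isIntegrallyClosed_dvd hint hroot)

theorem mem_adjoin_of_isIntegral_of_isPrimitiveRoot {L : Type*} [Field L] [Algebra ℚ_[p] L]
    [Algebra ℤ_[p] L] [IsScalarTower ℤ_[p] ℚ_[p] L] {ζ : L} (hζ : IsPrimitiveRoot ζ p)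
    (hgen : adjoin ℚ_[p] {ζ} = ⊤) {z : L} (hz : IsIntegral ℤ_[p] z) :
    z ∈ adjoin ℤ_[p] {ζ} := by
  have hζint : IsIntegral ℤ_[p] ζ :=
    .of_pow (Fact.out : p.Prime).pos (hζ.pow_eq_one ▸ isIntegral_one)
  have hint : IsIntegral ℤ_[p] (ζ - 1) := hζint.sub isIntegral_one
  have hgen' : adjoin ℚ_[p] {ζ - 1} = ⊤ := by
    refine PowerBasis.adjoin_eq_top_of_gen_mem_adjoin
      (B := PowerBasis.ofAdjoinEqTop hζint.tower_top hgen) ?_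
    simpa using add_mem (subset_adjoin (Set.mem_singleton (ζ - 1)))
      (one_mem (adjoin ℚ_[p] {ζ - 1}))
  let B := PowerBasis.ofAdjoinEqTop hint.tower_top hgen'
  have hB : B.gen = ζ - 1 := PowerBasis.ofAdjoinEqTop_gen _ _
  have := B.finite
  have : FaithfulSMul ℤ_[p] L := (faithfulSMul_iff_algebraMap_injective ℤ_[p] L).2 <| by
    rw [IsScalarTower.algebraMap_eq ℤ_[p] ℚ_[p] L]
    exact (algebraMap ℚ_[p] L).injective.comp (IsFractionRing.injective ℤ_[p] ℚ_[p])
  have hei : (minpoly ℤ_[p] B.gen).IsEisensteinAt (Ideal.span {(p : ℤ_[p])}) := by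
    rw [hB, minpoly_sub_one_eq_cyclotomic_comp_padicInt p hζ]
    exact cyclotomic_comp_X_add_one_isEisensteinAt_padicInt p
  have hmem := mem_adjoin_of_isIntegral_of_minpoly_isEisensteinAt PadicInt.irreducible_p
    (hB ▸ hint) hei hz
  rw [hB] at hmem
  refine adjoin_le ?_ hmem
  rw [Set.singleton_subset_iff]
  exact sub_mem (subset_adjoin rfl) (one_mem _)

theorem adjoin_eq_top_of_isPrimitiveRoot (hθ : IsPrimitiveRoot (θ : K) p)
    (hgen : adjoin ℚ_[p] {(θ : K)} = ⊤) : adjoin ℤ_[p] {θ} = ⊤ := by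
  refine _root_.eq_top_iff.2 fun x _ ↦ ?_
  have hx := mem_adjoin_of_isIntegral_of_isPrimitiveRoot p hθ hgen x.2
  rw [← show (𝒪 p K).val '' {θ} = {(θ : K)} from Set.image_singleton, adjoin_image] at hx
  obtain ⟨y, hy, hyx⟩ := hx
  exact Subtype.ext hyx ▸ hy

section CrossForm

variable {R A : Type*} [CommRing R] [CommRing A] [Algebra R A] (τ₁ τ₂ : A →ₐ[R] A)

def crossForm (x y : A) : A := τ₁ x * τ₂ y - τ₂ x * τ₁ y

theorem crossForm_mul_mul (r x y : A) :
    crossForm τ₁ τ₂ (r * x) (r * y) = τ₁ r * τ₂ r * crossForm τ₁ τ₂ x y := by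
  simp only [crossForm, map_mul]
  ring

theorem crossForm_smul_left (c : R) (x y : A) :
    crossForm τ₁ τ₂ (c • x) y = c • crossForm τ₁ τ₂ x y := by
  simp only [crossForm, map_smul, smul_mul_assoc, smul_sub]

theorem crossForm_self_mul (x z : A) :
    crossForm τ₁ τ₂ x (x * z) = τ₁ x * τ₂ x * (τ₂ z - τ₁ z) := by
  simp only [crossForm, map_mul]
  ring

variable {τ₁ τ₂}

theorem dvd_sub_of_adjoin_eq_top {θ κ : A} (hgen : adjoin R {θ} = ⊤)
    (hθ : κ ∣ τ₂ θ - τ₁ θ) (v : A) : κ ∣ τ₂ v - τ₁ v := by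
  have hmk : (Ideal.Quotient.mkₐ R (Ideal.span {κ})).comp τ₂
      = (Ideal.Quotient.mkₐ R (Ideal.span {κ})).comp τ₁ :=
    AlgHom.ext_of_adjoin_eq_top hgen fun _ hx ↦ by
      rw [Set.mem_singleton_iff.1 hx]
      simpa [Ideal.Quotient.eq, Ideal.mem_span_singleton] using hθ
  simpa [Ideal.Quotient.eq, Ideal.mem_span_singleton] using congr($hmk v)

theorem pow_dvd_crossForm {κ x y : A} {i : ℕ} (h₁ : κ ∣ τ₁ κ) (h₂ : κ ∣ τ₂ κ)
    (h : ∀ v, κ ∣ τ₂ v - τ₁ v) (hx : κ ^ i ∣ x) (hy : κ ^ i ∣ y) :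
    κ ^ (2 * i + 1) ∣ crossForm τ₁ τ₂ x y := by
  obtain ⟨x, rfl⟩ := hx
  obtain ⟨y, rfl⟩ := hy
  have hxy : κ ∣ crossForm τ₁ τ₂ x y := by
    have : crossForm τ₁ τ₂ x y = τ₁ x * (τ₂ y - τ₁ y) - (τ₂ x - τ₁ x) * τ₁ y := by
      unfold crossForm; ring
    rw [this]
    exact dvd_sub (dvd_mul_of_dvd_right (h y) _) (dvd_mul_of_dvd_left (h x) _)
  rw [crossForm_mul_mul, map_pow, map_pow, pow_succ, two_mul, pow_add]
  exact mul_dvd_mul (mul_dvd_mul (pow_dvd_pow_of_dvd h₁ i) (pow_dvd_pow_of_dvd h₂ i)) hxy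

theorem mul_crossForm_mem_span {θ : A} (hgen : adjoin R {θ} = ⊤) (hθ : τ₁ θ * τ₂ θ = θ)
    {I : Ideal A} {x y : A} (hx : x ∈ I) (hy : y ∈ I) (w : A) :
    w * crossForm τ₁ τ₂ x y ∈ Submodule.span ℤ (Set.image2 (crossForm τ₁ τ₂) I I) := by
  obtain ⟨f, rfl⟩ : ∃ f : R[X], aeval θ f = w := by
    rw [← AlgHom.mem_range, ← adjoin_singleton_eq_range_aeval, hgen]
    trivial
  induction f using Polynomial.induction_on' with
  | add f g hf hg => rw [map_add, add_mul]; exact add_mem hf hg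
  | monomial k c =>
    refine Submodule.subset_span ⟨c • (θ ^ k * x), ?_, θ ^ k * y, I.mul_mem_left _ hy, ?_⟩
    · rw [smul_def]
      exact I.mul_mem_left _ (I.mul_mem_left _ hx)
    · rw [crossForm_smul_left, crossForm_mul_mul, map_pow, map_pow, ← mul_pow, hθ,
        aeval_monomial, ← smul_def, smul_mul_assoc]

theorem span_crossForm_eq {θ : A} (hgen : adjoin R {θ} = ⊤) (hθ : τ₁ θ * τ₂ θ = θ)
    (h₁ : Associated (θ - 1) (τ₁ θ - 1)) (h₂ : Associated (θ - 1) (τ₂ θ - 1))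
    (h₁₂ : Associated (θ - 1) (τ₂ θ - τ₁ θ)) (i : ℕ) :
    Submodule.span ℤ (Set.image2 (crossForm τ₁ τ₂) ↑(Ideal.span {θ - 1} ^ i)
        ↑(Ideal.span {θ - 1} ^ i))
      = (Ideal.span {θ - 1} ^ (2 * i + 1)).restrictScalars ℤ := by
  have hτ₁ : τ₁ (θ - 1) = τ₁ θ - 1 := by rw [map_sub, map_one]
  have hτ₂ : τ₂ (θ - 1) = τ₂ θ - 1 := by rw [map_sub, map_one]
  simp only [Ideal.span_singleton_pow]
  apply le_antisymm
  · rw [Submodule.span_le]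
    rintro _ ⟨x, hx, y, hy, rfl⟩
    rw [SetLike.mem_coe, Ideal.mem_span_singleton] at hx hy
    refine Ideal.mem_span_singleton.2 (pow_dvd_crossForm (hτ₁ ▸ h₁.dvd) (hτ₂ ▸ h₂.dvd)
      (dvd_sub_of_adjoin_eq_top hgen h₁₂.dvd) hx hy)
  · intro z hz
    obtain ⟨w, rfl⟩ := Ideal.mem_span_singleton'.1 hz
    have hval : crossForm τ₁ τ₂ ((θ - 1) ^ i) ((θ - 1) ^ i * (θ - 1))
        = (τ₁ θ - 1) ^ i * (τ₂ θ - 1) ^ i * (τ₂ θ - τ₁ θ) := by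
      rw [crossForm_self_mul, map_pow, map_pow, hτ₁, hτ₂]
      ring
    obtain ⟨u, hu⟩ : Associated (crossForm τ₁ τ₂ ((θ - 1) ^ i) ((θ - 1) ^ i * (θ - 1)))
        ((θ - 1) ^ (2 * i + 1)) := by
      rw [hval, pow_succ, two_mul, pow_add]
      exact (((h₁.pow_pow).mul_mul h₂.pow_pow).mul_mul h₁₂).symm
    rw [← hu, mul_comm _ (u : A), ← mul_assoc]
    exact mul_crossForm_mem_span hgen hθ (Ideal.mem_span_singleton_self _)
      (Ideal.mul_mem_right _ _ (Ideal.mem_span_singleton_self _)) _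

theorem span_crossForm_eq_of_isPrimitiveRoot [IsDomain A] {θ : A} {n a b : ℕ}
    (hθ : IsPrimitiveRoot θ n) (hgen : adjoin R {θ} = ⊤) (h₁ : τ₁ θ = θ ^ a)
    (h₂ : τ₂ θ = θ ^ b) (hab : a ≤ b) (ha : a.Coprime n) (hb : b.Coprime n)
    (hba : (b - a).Coprime n) (hsum : a + b ≡ 1 [MOD n]) (i : ℕ) :
    Submodule.span ℤ (Set.image2 (crossForm τ₁ τ₂) ↑(Ideal.span {θ - 1} ^ i)
        ↑(Ideal.span {θ - 1} ^ i))
      = (Ideal.span {θ - 1} ^ (2 * i + 1)).restrictScalars ℤ := by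
  have hn : n ≠ 0 := by
    -- coprimality to `0` would force `a = b = 1`, but then `b - a = 0`
    rintro rfl
    simp_all [Nat.coprime_zero_right]
  have hsub : θ ^ b - θ ^ a = θ ^ a * (θ ^ (b - a) - 1) := by
    rw [mul_sub, ← pow_add, Nat.add_sub_cancel' hab, mul_one]
  refine span_crossForm_eq hgen ?_ (h₁ ▸ hθ.associated_sub_one_pow_sub_one_of_coprime ha)
    (h₂ ▸ hθ.associated_sub_one_pow_sub_one_of_coprime hb) ?_ i
  · rw [h₁, h₂, ← pow_add, pow_eq_pow_of_modEq hsum hθ.pow_eq_one, pow_one]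
  · rw [h₁, h₂, hsub]
    exact (hθ.associated_sub_one_pow_sub_one_of_coprime hba).trans
      (associated_unit_mul_left _ _ ((hθ.isUnit hn).pow a)).symm

end CrossForm

noncomputable def sigmaRestrict (j : ℤ) : 𝒪 p K →ₐ[ℤ_[p]] 𝒪 p K :=
  ((σ j).restrictScalars ℤ_[p]).mapIntegralClosure

theorem sigmaRestrict_apply_of_eq_pow {j : ℤ} {m : ℕ} (hj : σ j (θ : K) = (θ : K) ^ m) :
    sigmaRestrict p K σ j θ = θ ^ m :=
  Subtype.ext (by simpa [sigmaRestrict] using hj)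

theorem setOf_thetaMap_eq_image2 (a : ℤ) (I : Ideal (𝒪 p K)) :
    {z : 𝒪 p K | ∃ x ∈ I, ∃ y ∈ I, (z : K) = thetaMap p K σ a (x : K) (y : K)}
      = Set.image2 (crossForm (sigmaRestrict p K σ a) (sigmaRestrict p K σ (1 - a))) I I := by
  ext z
  simp only [Set.mem_ofPred_eq, Set.mem_image2, SetLike.mem_coe, Subtype.ext_iff, eq_comm]
  rfl

theorem frame_theta_in_Hhat (hθ : IsPrimitiveRoot (θ : K) p)
    (hgen : Algebra.adjoin ℚ_[p] {(θ : K)} = ⊤)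
    (hσ : ∀ j : ℤ, ¬ ((p : ℤ) ∣ j) → σ j (θ : K) = (θ : K) ^ j)
    (i : ℕ) (a : ℕ) (ha2 : 2 ≤ a) (ha : a ≤ (p - 1) / 2) :
    Submodule.span ℤ {z : 𝒪 p K | ∃ x ∈ pid p K θ ^ i, ∃ y ∈ pid p K θ ^ i,
        (z : K) = thetaMap p K σ (a : ℤ) (x : K) (y : K)}
      = (pid p K θ ^ (2 * i + 1)).restrictScalars ℤ := by
  have hp := (Fact.out : p.Prime)
  have h2a : 2 * a ≤ p - 1 := by omega
  have hndvd (j : ℤ) (hj : j ≠ 0) (hjp : |j| < p) : ¬ (p : ℤ) ∣ j :=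
    fun hdvd ↦ hj (Int.eq_zero_of_abs_lt_dvd hdvd hjp)
  have hcop (m : ℕ) (hm : 0 < m) (hmp : m < p) : m.Coprime p :=
    (Nat.coprime_of_lt_prime hm.ne' hmp hp).symm
  have hσa : σ a (θ : K) = (θ : K) ^ a := by
    simpa using hσ a (hndvd a (by omega) (abs_lt.2 ⟨by omega, by omega⟩))
  have hσb : σ (1 - a) (θ : K) = (θ : K) ^ (p + 1 - a) := by
    have hexp : ((p + 1 - a : ℕ) : ℤ) = (1 - a : ℤ) + p := by omega
    rw [hσ _ (hndvd _ (by omega) (abs_lt.2 ⟨by omega, by omega⟩)), ← zpow_natCast, hexp,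
      zpow_add₀ (hθ.ne_zero hp.ne_zero), zpow_natCast, hθ.pow_eq_one, mul_one]
  rw [setOf_thetaMap_eq_image2, pid]
  exact span_crossForm_eq_of_isPrimitiveRoot
    (hθ.of_map_of_injective (f := (𝒪 p K).val) Subtype.val_injective)
    (adjoin_eq_top_of_isPrimitiveRoot p K θ hθ hgen) (sigmaRestrict_apply_of_eq_pow p K θ σ hσa)
    (sigmaRestrict_apply_of_eq_pow p K θ σ hσb) (by omega) (hcop _ (by omega) (by omega))
    (hcop _ (by omega) (by omega)) (hcop _ (by omega) (by omega))
    (by rw [Nat.ModEq, show a + (p + 1 - a) = 1 + p by omega, Nat.add_mod_right]) i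

end MaximalClassFrame
end

section
/- Let γ ∈ H and let i, j ∈ ℕ₀. Then γ(x, y) ∈ 𝔭^{i+j−(p−2)} for all x ∈ 𝔭^i and y ∈ 𝔭^j (where 𝔭^k = O for k ≤ 0). -/
/-!
Write `κ = θ - 1`, so that `𝔭^i = (κ^i)`. With `θ = 1 + κ`, equivariance becomes
`κ γ(x, y) = γ(κx, y) + γ(x, κy) + γ(κx, κy)`. Hence once `i + j ≥ p - 1`, the bound for the
three pairs `(i + 1, j)`, `(i, j + 1)`, `(i + 1, j + 1)` gives, after cancelling `κ`, the bound
for `(i, j)`. Since `𝔭^{p-1} = (p)` and `γ` is `ℤ`-bilinear, the bound for `(i, j)` also yields it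
for `(i + p - 1, j)` and `(i, j + p - 1)`. The bound is trivial for `i + j < p - 1`, so descending
induction over `0 ≤ i, j ≤ p - 1`, whose edges are shifts of the trivial range, and then shifting
gives all `(i, j)`.
-/

set_option synthInstance.maxHeartbeats 1000000
set_option maxHeartbeats 1000000

namespace MaximalClassFrame

variable (p : ℕ) [Fact p.Prime]
variable (K : Type) [Field K] [Algebra ℚ_[p] K] [Algebra ℤ_[p] K]
  [IsScalarTower ℤ_[p] ℚ_[p] K]

variable (θ : 𝒪 p K)

/-- `𝔭^k` for an integer `k`, with the convention `𝔭^k = 𝒪` for `k ≤ 0`. -/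
noncomputable def pidz (k : ℤ) : Ideal (𝒪 p K) := pid p K θ ^ k.toNat

open Polynomial in
theorem _root_.IsPrimitiveRoot.associated_sub_one_pow_pred_natCast {A : Type*} [CommRing A]
    [IsDomain A] {ζ : A} {ℓ : ℕ} (hℓ : ℓ.Prime) (hζ : IsPrimitiveRoot ζ ℓ) :
    Associated ((ζ - 1) ^ (ℓ - 1)) (ℓ : A) := by
  have : Fact ℓ.Prime := ⟨hℓ⟩
  rw [← eval_one_cyclotomic_prime (R := A) (p := ℓ),
    cyclotomic_eq_prod_X_sub_primitiveRoots hζ, eval_prod]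
  simp only [eval_sub, eval_X, eval_C]
  rw [← Nat.totient_prime hℓ, ← hζ.card_primitiveRoots, ← Finset.prod_const]
  refine Associated.prod _ _ _ fun η hη ↦ ?_
  obtain ⟨k, -, hk, rfl⟩ := hζ.isPrimitiveRoot_iff.mp (isPrimitiveRoot_of_mem_primitiveRoots hη)
  simpa using (hζ.associated_sub_one_pow_sub_one_of_coprime hk).neg_right

section Equivariant

variable {R S : Type*} [CommRing R] [CommSemiring S] [Module S R]

/-- With `n = p - 1` this is `γ(𝔭^i, 𝔭^j) ⊆ 𝔭^{i+j-(p-2)}`; the truncated subtraction realises the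
convention `𝔭^k = 𝒪` for `k ≤ 0`. -/
def DvdBound (γ : R →ₗ[S] R →ₗ[S] R) (κ : R) (n i j : ℕ) : Prop :=
  ∀ ⦃x y : R⦄, κ ^ i ∣ x → κ ^ j ∣ y → κ ^ (i + j + 1 - n) ∣ γ x y

variable {γ : R →ₗ[S] R →ₗ[S] R} {κ ζ : R} {n q : ℕ}

theorem dvdBound_of_add_lt {i j : ℕ} (h : i + j < n) : DvdBound γ κ n i j := by
  intro x y _ _
  rw [show i + j + 1 - n = 0 by omega, pow_zero]
  exact one_dvd _

theorem DvdBound.add_left {i j : ℕ} (hq : Associated (κ ^ n) (q : R))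
    (h : DvdBound γ κ n i j) : DvdBound γ κ n (i + n) j := by
  rintro _ y ⟨t, rfl⟩ hy
  obtain ⟨u, hu⟩ := hq.symm
  have hx : κ ^ (i + n) * t = q • (κ ^ i * (u * t)) := by
    rw [nsmul_eq_mul, pow_add, ← hu]; ring
  rw [hx, map_nsmul, LinearMap.smul_apply, nsmul_eq_mul]
  exact (pow_dvd_pow κ (by omega)).trans <|
    (pow_add κ n _).symm ▸ mul_dvd_mul hq.dvd (h (dvd_mul_right _ _) hy)

theorem DvdBound.add_right {i j : ℕ} (hq : Associated (κ ^ n) (q : R))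
    (h : DvdBound γ κ n i j) : DvdBound γ κ n i (j + n) := by
  rintro x _ hx ⟨t, rfl⟩
  obtain ⟨u, hu⟩ := hq.symm
  have hy : κ ^ (j + n) * t = q • (κ ^ j * (u * t)) := by
    rw [nsmul_eq_mul, pow_add, ← hu]; ring
  rw [hy, map_nsmul, nsmul_eq_mul]
  exact (pow_dvd_pow κ (by omega)).trans <|
    (pow_add κ n _).symm ▸ mul_dvd_mul hq.dvd (h hx (dvd_mul_right _ _))

theorem sub_one_mul_apply (hγ : ∀ x y, γ (ζ * x) (ζ * y) = ζ * γ x y) (x y : R) :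
    (ζ - 1) * γ x y =
      γ ((ζ - 1) * x) y + γ x ((ζ - 1) * y) + γ ((ζ - 1) * x) ((ζ - 1) * y) := by
  have h := hγ x y
  rw [show ζ * x = x + (ζ - 1) * x by ring, show ζ * y = y + (ζ - 1) * y by ring] at h
  simp only [map_add, LinearMap.add_apply] at h
  linear_combination -h

theorem dvdBound_zero_left (hn : 0 < n) (hq : Associated (κ ^ n) (q : R)) {j : ℕ} (hj : j ≤ n) :
    DvdBound γ κ n 0 j := by
  rcases hj.lt_or_eq with hj | rfl
  · exact dvdBound_of_add_lt (by omega)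
  · simpa using (dvdBound_of_add_lt (i := 0) (j := 0) hn).add_right hq

theorem dvdBound_zero_right (hn : 0 < n) (hq : Associated (κ ^ n) (q : R)) {i : ℕ} (hi : i ≤ n) :
    DvdBound γ κ n i 0 := by
  rcases hi.lt_or_eq with hi | rfl
  · exact dvdBound_of_add_lt (by omega)
  · simpa using (dvdBound_of_add_lt (i := 0) (j := 0) hn).add_left hq

variable [IsDomain R]

theorem DvdBound.of_succ {i j : ℕ} (hζ : ζ ≠ 1) (hγ : ∀ x y, γ (ζ * x) (ζ * y) = ζ * γ x y)
    (h₁ : DvdBound γ (ζ - 1) n (i + 1) j) (h₂ : DvdBound γ (ζ - 1) n i (j + 1))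
    (h₃ : DvdBound γ (ζ - 1) n (i + 1) (j + 1)) : DvdBound γ (ζ - 1) n i j := by
  rcases lt_or_ge (i + j) n with hlt | hge
  · exact dvdBound_of_add_lt hlt
  intro x y hx hy
  have hκx : (ζ - 1) ^ (i + 1) ∣ (ζ - 1) * x := pow_succ' (ζ - 1) i ▸ mul_dvd_mul_left _ hx
  have hκy : (ζ - 1) ^ (j + 1) ∣ (ζ - 1) * y := pow_succ' (ζ - 1) j ▸ mul_dvd_mul_left _ hy
  have key : (ζ - 1) * (ζ - 1) ^ (i + j + 1 - n) ∣ (ζ - 1) * γ x y := by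
    rw [← pow_succ', sub_one_mul_apply hγ]
    refine dvd_add (dvd_add ?_ ?_) ?_
    · exact (pow_dvd_pow _ (by omega)).trans (h₁ hκx hy)
    · exact (pow_dvd_pow _ (by omega)).trans (h₂ hx hκy)
    · exact (pow_dvd_pow _ (by omega)).trans (h₃ hκx hκy)
  exact (mul_dvd_mul_iff_left (sub_ne_zero.mpr hζ)).mp key

theorem dvdBound_of_le_of_le (hn : 0 < n) (hζ : ζ ≠ 1)
    (hγ : ∀ x y, γ (ζ * x) (ζ * y) = ζ * γ x y) (hq : Associated ((ζ - 1) ^ n) (q : R))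
    (i j : ℕ) (hi : i ≤ n) (hj : j ≤ n) : DvdBound γ (ζ - 1) n i j := by
  rcases hi.lt_or_eq with hi | rfl
  · rcases hj.lt_or_eq with hj | rfl
    · exact .of_succ hζ hγ (dvdBound_of_le_of_le hn hζ hγ hq (i + 1) j hi hj.le)
        (dvdBound_of_le_of_le hn hζ hγ hq i (j + 1) hi.le hj)
        (dvdBound_of_le_of_le hn hζ hγ hq (i + 1) (j + 1) hi hj)
    · simpa using (dvdBound_zero_right hn hq hi.le).add_right hq
  · simpa using (dvdBound_zero_left hn hq hj).add_left hq
termination_by (n - i) + (n - j)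

theorem dvdBound (hn : 0 < n) (hζ : ζ ≠ 1) (hγ : ∀ x y, γ (ζ * x) (ζ * y) = ζ * γ x y)
    (hq : Associated ((ζ - 1) ^ n) (q : R)) (i j : ℕ) : DvdBound γ (ζ - 1) n i j :=
  if hi : n < i then by
    obtain ⟨i, rfl⟩ : ∃ k, i = k + n := ⟨i - n, by omega⟩
    exact (dvdBound hn hζ hγ hq i j).add_left hq
  else if hj : n < j then by
    obtain ⟨j, rfl⟩ : ∃ k, j = k + n := ⟨j - n, by omega⟩
    exact (dvdBound hn hζ hγ hq i j).add_right hq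
  else dvdBound_of_le_of_le hn hζ hγ hq i j (by omega) (by omega)
termination_by i + j

end Equivariant

theorem frame_gamma_images (hθ : IsPrimitiveRoot (θ : K) p)
    (γ : 𝒪 p K →ₗ[ℤ_[p]] 𝒪 p K →ₗ[ℤ_[p]] 𝒪 p K) (hγ : IsPEquivariant p K θ γ)
    (i j : ℕ) :
    ∀ x ∈ pid p K θ ^ i, ∀ y ∈ pid p K θ ^ j,
      γ x y ∈ pidz p K θ ((i : ℤ) + (j : ℤ) - ((p : ℤ) - 2)) := by
  have hp : p.Prime := Fact.out
  have hp2 : 2 ≤ p := hp.two_le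
  have hθ' : IsPrimitiveRoot θ p := IsPrimitiveRoot.coe_submonoidClass_iff.mp hθ
  intro x hx y hy
  rw [pid, Ideal.span_singleton_pow, Ideal.mem_span_singleton] at hx hy
  rw [pidz, pid, Ideal.span_singleton_pow, Ideal.mem_span_singleton,
    show ((i : ℤ) + j - (p - 2)).toNat = i + j + 1 - (p - 1) by omega]
  exact dvdBound (by omega) (hθ'.ne_one hp.one_lt) hγ.2
    (hθ'.associated_sub_one_pow_pred_natCast hp) i j hx hy

end MaximalClassFrame
end

section
/- Let i > p−2 and let γ ∈ Ĥ_i with J_i(γ) ≠ {0}. Then the Lie ring L_i(γ) = 𝔭^i/J_i(γ) is nilpotent — that is, there exists c ∈ ℕ with W_{c+1}(i) ⊆ J_i(γ) — and its cardinality, the index [𝔭^i : J_i(γ)], is at least p^{2i+3−p}. -/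
set_option synthInstance.maxHeartbeats 1000000
set_option maxHeartbeats 1000000

namespace MaximalClassFrame

variable (p : ℕ) [Fact p.Prime]
variable (K : Type) [Field K] [Algebra ℚ_[p] K] [Algebra ℤ_[p] K]
  [IsScalarTower ℤ_[p] ℚ_[p] K]

variable (θ : 𝒪 p K)

variable (γ : 𝒪 p K →ₗ[ℤ_[p]] 𝒪 p K →ₗ[ℤ_[p]] 𝒪 p K)

/-- The ideal `J_i(γ)` of `𝒪` generated by the Jacobi expressions
`γ(γ(x,y),z) + γ(γ(y,z),x) + γ(γ(z,x),y)` for `x, y, z ∈ 𝔭^i`. -/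
noncomputable def Jid (i : ℕ) : Ideal (𝒪 p K) :=
  Ideal.span {v : 𝒪 p K | ∃ x ∈ pid p K θ ^ i, ∃ y ∈ pid p K θ ^ i, ∃ z ∈ pid p K θ ^ i,
    v = γ (γ x y) z + γ (γ y z) x + γ (γ z x) y}

/-- The ideals `W_k(i)`:  `W_1(i) = 𝔭^i` and `W_{k+1}(i)` is the ideal
generated by `{γ(x,y) : x ∈ W_k(i), y ∈ 𝔭^i}`. -/
noncomputable def Wid (i : ℕ) : ℕ → Ideal (𝒪 p K)
  | 0 => ⊤
  | 1 => pid p K θ ^ i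
  | (k + 2) => Ideal.span (Set.image2 (fun x y => γ x y)
      ((Wid i (k + 1) : Ideal (𝒪 p K)) : Set (𝒪 p K))
      ((pid p K θ ^ i : Ideal (𝒪 p K)) : Set (𝒪 p K)))

/-!
Write `κ = θ - 1`. Since `κ^(p - 1)` and `p` are associates, `𝔭^(n + (p - 1) k) = p^k 𝔭^n`,
and `ℤ_p`-bilinearity of `γ` upgrades `γ(𝔭^i, 𝔭^i) ⊆ 𝔭^(2i+1)` to
`γ(𝔭^(i + (p - 1) k), 𝔭^i) ⊆ 𝔭^(2i + 1 + (p - 1) k)`. For `i ≥ p - 2` this gives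
`W_(k+1) ⊆ 𝔭^(i + (p - 1) k) = p^k 𝔭^i`, and applied twice it gives `J ⊆ 𝔭^(3i + 3 - p)`.
The nonzero ideal `J` of the integral extension `𝒪 / ℤ_p` contains some `p^m`, so
`W_(m+1) ⊆ J` and `𝔭^i / J` is finite. Its order is at least that of `𝔭^i / 𝔭^(3i + 3 - p)`,
and each layer `𝔭^n / 𝔭^(n+1)` contains the `p` distinct classes of `d κ^n`, `0 ≤ d < p`,
because `κ` divides `p` but is not a unit.
-/

open Ideal

theorem _root_.IsPrimitiveRoot.associated_sub_one_pow_prime {A : Type*} [CommRing A] [IsDomain A]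
    {p : ℕ} [hp : Fact p.Prime] {ζ : A} (hζ : IsPrimitiveRoot ζ p) :
    Associated ((ζ - 1) ^ (p - 1)) (p : A) := by
  rw [← Polynomial.eval_one_cyclotomic_prime (R := A) (p := p),
    Polynomial.cyclotomic_eq_prod_X_sub_primitiveRoots hζ, Polynomial.eval_prod]
  simp only [Polynomial.eval_sub, Polynomial.eval_X, Polynomial.eval_C]
  rw [← Nat.totient_prime hp.out, ← hζ.card_primitiveRoots, ← Finset.prod_const]
  refine Associated.prod _ _ _ fun η hη ↦ ?_
  have : NeZero p := ⟨hp.out.ne_zero⟩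
  obtain ⟨i, -, hi, rfl⟩ :=
    hζ.isPrimitiveRoot_iff.mp (isPrimitiveRoot_of_mem_primitiveRoots hη)
  simpa using (hζ.associated_sub_one_pow_sub_one_of_coprime hi).neg_right

theorem _root_.Algebra.IsIntegral.not_isUnit_algebraMap {R S : Type*} [CommRing R] [CommRing S]
    [Algebra R S] [Algebra.IsIntegral R S] [FaithfulSMul R S] {r : R} (hr : ¬IsUnit r) :
    ¬IsUnit (algebraMap R S r) := by
  obtain ⟨P, hPmax, hrP⟩ := exists_max_ideal_of_mem_nonunits hr
  obtain ⟨Q, hQmax, hQP⟩ := exists_maximal_ideal_liesOver_of_isIntegral (S := S) P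
  have hrQ : algebraMap R S r ∈ Q := by
    rw [← mem_comap, ← under_def, ← hQP.over]
    exact hrP
  exact fun hu ↦ hQmax.ne_top (eq_top_of_isUnit_mem Q hrQ hu)

theorem _root_.not_dvd_intCast_of_dvd_prime {A : Type*} [CommRing A] {κ : A} {p : ℕ}
    (hp : p.Prime) (hκp : κ ∣ (p : A)) (hκ : ¬IsUnit κ) {d : ℤ} (hd : ¬(p : ℤ) ∣ d) :
    ¬κ ∣ (d : A) := by
  intro hκd
  have hcop : IsCoprime (p : ℤ) d :=
    (Nat.prime_iff_prime_int.mp hp).irreducible.coprime_iff_not_dvd.mpr hd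
  exact hκ <| (hcop.map (Int.castRingHom A)).isUnit_of_dvd' (by simpa using hκp)
    (by simpa using hκd)

section PrincipalPowers

variable {A : Type*} [CommRing A] [IsDomain A] {κ : A} {p : ℕ}

theorem _root_.Ideal.le_relIndex_span_pow_succ (hp : p.Prime) (hκp : κ ∣ (p : A))
    (hκ : ¬IsUnit κ) (hκ0 : κ ≠ 0) (n : ℕ)
    (hfin : (span {κ} ^ (n + 1)).toAddSubgroup.relIndex (span {κ} ^ n).toAddSubgroup ≠ 0) :
    p ≤ (span {κ} ^ (n + 1)).toAddSubgroup.relIndex (span {κ} ^ n).toAddSubgroup := by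
  set L := (span {κ} ^ n).toAddSubgroup
  set H := (span {κ} ^ (n + 1)).toAddSubgroup
  rw [AddSubgroup.relIndex, AddSubgroup.index] at hfin ⊢
  have := Nat.finite_of_card_ne_zero hfin
  have hmem (d : Fin p) : (d : A) * κ ^ n ∈ L := by
    simp [L, span_singleton_pow, mem_span_singleton]
  let f (d : Fin p) : L ⧸ H.addSubgroupOf L := QuotientAddGroup.mk ⟨_, hmem d⟩
  suffices f.Injective by simpa using Nat.card_le_card_of_injective f this
  intro d e hde
  rw [QuotientAddGroup.eq, AddSubgroup.mem_addSubgroupOf] at hde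
  have hsub : (((e : ℤ) - d : ℤ) : A) * κ ^ n ∈ H := by
    convert hde using 1
    push_cast
    ring
  have hdvd : κ ^ n * κ ∣ (((e : ℤ) - d : ℤ) : A) * κ ^ n := by
    rwa [← pow_succ, ← mem_span_singleton, ← span_singleton_pow]
  have hκde : κ ∣ (((e : ℤ) - d : ℤ) : A) := by
    rw [mul_comm (κ ^ n)] at hdvd
    exact (mul_dvd_mul_iff_right (pow_ne_zero n hκ0)).mp hdvd
  by_contra hne
  refine not_dvd_intCast_of_dvd_prime hp hκp hκ (fun hpde ↦ hne ?_) hκde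
  have := Int.eq_zero_of_abs_lt_dvd hpde (by grind)
  omega

theorem _root_.Ideal.pow_le_relIndex_span_pow_add (hp : p.Prime) (hκp : κ ∣ (p : A))
    (hκ : ¬IsUnit κ) (hκ0 : κ ≠ 0) (c s : ℕ) {H : AddSubgroup A}
    (hH : H ≤ (span {κ} ^ (c + s)).toAddSubgroup)
    (hfin : H.relIndex (span {κ} ^ c).toAddSubgroup ≠ 0) :
    p ^ s ≤ H.relIndex (span {κ} ^ c).toAddSubgroup := by
  induction s generalizing H with
  | zero => simpa using Nat.one_le_iff_ne_zero.mpr hfin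
  | succ s ih =>
    have hstep : (span {κ} ^ (c + s + 1)).toAddSubgroup ≤ (span {κ} ^ (c + s)).toAddSubgroup :=
      Submodule.toAddSubgroup_mono (pow_le_pow_right (Nat.le_succ _))
    have hsplit := AddSubgroup.relIndex_mul_relIndex _ _ _ hstep
      (Submodule.toAddSubgroup_mono (pow_le_pow_right (Nat.le_add_right c s)))
    have hfin' : (span {κ} ^ (c + s + 1)).toAddSubgroup.relIndex
        (span {κ} ^ c).toAddSubgroup ≠ 0 :=
      fun h ↦ hfin (AddSubgroup.relIndex_eq_zero_of_le_left hH h)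
    rw [← hsplit, mul_ne_zero_iff] at hfin'
    calc p ^ (s + 1) = p * p ^ s := pow_succ' p s
      _ ≤ _ := Nat.mul_le_mul (le_relIndex_span_pow_succ hp hκp hκ hκ0 _ hfin'.1)
          (ih le_rfl hfin'.2)
      _ = _ := hsplit
      _ ≤ H.relIndex (span {κ} ^ c).toAddSubgroup := AddSubgroup.relIndex_le_of_le_left hH hfin

end PrincipalPowers

instance _root_.PadicInt.hasFiniteQuotients : Ring.HasFiniteQuotients ℤ_[p] where
  finiteQuotient {I} hI := by
    obtain ⟨n, rfl⟩ := PadicInt.ideal_eq_span_pow_p hI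
    refine IsLocalRing.finite_quotient_iff.mpr ⟨n, ?_⟩
    rw [PadicInt.maximalIdeal_eq_span_p, span_singleton_pow]

theorem _root_.PadicInt.exists_natCast_pow_mem {S : Type*} [CommRing S] [IsDomain S]
    [Algebra ℤ_[p] S] [Algebra.IsIntegral ℤ_[p] S] {I : Ideal S} (hI : I ≠ ⊥) :
    ∃ m, (p : S) ^ m ∈ I := by
  obtain ⟨m, hm⟩ := PadicInt.ideal_eq_span_pow_p (under_ne_bot ℤ_[p] hI)
  have : (p : ℤ_[p]) ^ m ∈ I.under ℤ_[p] := hm ▸ mem_span_singleton_self _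
  exact ⟨m, by simpa using this⟩

theorem _root_.Algebra.finiteDimensional_of_adjoin_singleton_eq_top {F L : Type*} [Field F]
    [Field L] [Algebra F L] {x : L} (hx : IsIntegral F x) (h : Algebra.adjoin F {x} = ⊤) :
    FiniteDimensional F L :=
  ⟨by rw [← Algebra.top_toSubmodule, ← h]; exact hx.fg_adjoin_singleton⟩

instance faithfulSMul_padicInt : FaithfulSMul ℤ_[p] K :=
  (faithfulSMul_iff_algebraMap_injective _ _).mpr <| by
    rw [IsScalarTower.algebraMap_eq ℤ_[p] ℚ_[p] K]
    exact (algebraMap ℚ_[p] K).injective.comp (IsFractionRing.injective ℤ_[p] ℚ_[p])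

instance hasFiniteQuotients [FiniteDimensional ℚ_[p] K] : Ring.HasFiniteQuotients (𝒪 p K) :=
  have : Module.Finite ℤ_[p] (𝒪 p K) := IsIntegralClosure.finite ℤ_[p] ℚ_[p] K (𝒪 p K)
  .of_module_finite ℤ_[p] (𝒪 p K)

theorem not_isUnit_natCast : ¬IsUnit (p : 𝒪 p K) := by
  simpa using
    Algebra.IsIntegral.not_isUnit_algebraMap (S := 𝒪 p K) PadicInt.irreducible_p.not_isUnit

theorem not_isUnit_sub_one {θ : 𝒪 p K} (hθ : IsPrimitiveRoot θ p) : ¬IsUnit (θ - 1) :=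
  fun hu ↦ not_isUnit_natCast p K (hθ.associated_sub_one_pow_prime.isUnit (hu.pow _))

section Frame

variable {p : ℕ} [Fact p.Prime] {K : Type} [Field K] [Algebra ℤ_[p] K] {θ : 𝒪 p K}
  {γ : 𝒪 p K →ₗ[ℤ_[p]] 𝒪 p K →ₗ[ℤ_[p]] 𝒪 p K} {i : ℕ}

theorem pid_pow_add_mul (hθ : IsPrimitiveRoot θ p) (n k : ℕ) :
    pid p K θ ^ (n + (p - 1) * k) = span {(p : 𝒪 p K) ^ k} * pid p K θ ^ n := by
  rw [pow_add, pow_mul, pid, span_singleton_pow (θ - 1) (p - 1),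
    span_singleton_eq_span_singleton.mpr hθ.associated_sub_one_pow_prime, mul_comm,
    span_singleton_pow]

theorem mem_pid_pow_add_mul (hθ : IsPrimitiveRoot θ p) {n k : ℕ} {x : 𝒪 p K} :
    x ∈ pid p K θ ^ (n + (p - 1) * k) ↔ ∃ y ∈ pid p K θ ^ n, (p : 𝒪 p K) ^ k * y = x := by
  rw [pid_pow_add_mul hθ, mem_span_singleton_mul]

theorem gamma_mem_pid_pow (hγi : InHhat p K θ i γ) {x y : 𝒪 p K} (hx : x ∈ pid p K θ ^ i)
    (hy : y ∈ pid p K θ ^ i) : γ x y ∈ pid p K θ ^ (2 * i + 1) := by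
  have : γ x y ∈ (pid p K θ ^ (2 * i + 1)).restrictScalars ℤ :=
    hγi ▸ Submodule.subset_span (Set.mem_image2_of_mem hx hy)
  exact this

theorem gamma_mem_pid_pow_add_mul (hθ : IsPrimitiveRoot θ p) (hγi : InHhat p K θ i γ) (k : ℕ)
    {x y : 𝒪 p K} (hx : x ∈ pid p K θ ^ (i + (p - 1) * k)) (hy : y ∈ pid p K θ ^ i) :
    γ x y ∈ pid p K θ ^ (2 * i + 1 + (p - 1) * k) := by
  obtain ⟨x', hx', rfl⟩ := (mem_pid_pow_add_mul hθ).mp hx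
  have hγp : γ ((p : 𝒪 p K) ^ k * x') y = (p : 𝒪 p K) ^ k * γ x' y := by
    simpa [Algebra.smul_def] using γ.map_smul₂ ((p : ℤ_[p]) ^ k) x' y
  rw [hγp]
  exact (mem_pid_pow_add_mul hθ).mpr ⟨_, gamma_mem_pid_pow hγi hx' hy, rfl⟩

theorem Wid_le_pid_pow (hθ : IsPrimitiveRoot θ p) (hγi : InHhat p K θ i γ) (hi : p ≤ i + 2)
    (k : ℕ) : Wid p K θ γ i (k + 1) ≤ pid p K θ ^ (i + (p - 1) * k) := by
  induction k with
  | zero => simp [Wid]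
  | succ k ih =>
    refine span_le.mpr ?_
    rintro _ ⟨x, hx, y, hy, rfl⟩
    refine pow_le_pow_right ?_ (gamma_mem_pid_pow_add_mul hθ hγi k (ih hx) hy)
    rw [Nat.mul_succ]
    omega

theorem Jid_le_pid_pow (hθ : IsPrimitiveRoot θ p) (hγi : InHhat p K θ i γ) :
    Jid p K θ γ i ≤ pid p K θ ^ (i + (2 * i + 3 - p)) := by
  have hp : 0 < p - 1 := Nat.sub_pos_of_lt (Fact.out : p.Prime).one_lt
  -- the largest `k` with `i + (p - 1) * k ≤ 2 * i + 1`
  set k := (i + 1) / (p - 1)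
  have hk : (p - 1) * k + (i + 1) % (p - 1) = i + 1 := Nat.div_add_mod (i + 1) (p - 1)
  have hr := Nat.mod_lt (i + 1) hp
  have hterm {a b c : 𝒪 p K} (ha : a ∈ pid p K θ ^ i) (hb : b ∈ pid p K θ ^ i)
      (hc : c ∈ pid p K θ ^ i) : γ (γ a b) c ∈ pid p K θ ^ (i + (2 * i + 3 - p)) := by
    have hab : γ a b ∈ pid p K θ ^ (i + (p - 1) * k) :=
      pow_le_pow_right (by omega) (gamma_mem_pid_pow hγi ha hb)
    exact pow_le_pow_right (by omega) (gamma_mem_pid_pow_add_mul hθ hγi k hab hc)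
  refine span_le.mpr ?_
  rintro _ ⟨x, hx, y, hy, z, hz, rfl⟩
  exact add_mem (add_mem (hterm hx hy hz) (hterm hy hz hx)) (hterm hz hx hy)

end Frame

theorem frame_L_nilpotent_and_size (hθ : IsPrimitiveRoot (θ : K) p)
    (hgen : Algebra.adjoin ℚ_[p] {(θ : K)} = ⊤)
    (i : ℕ) (hi : p - 2 < i) (hγi : InHhat p K θ i γ) (hJ : Jid p K θ γ i ≠ ⊥) :
    (∃ c : ℕ, Wid p K θ γ i (c + 1) ≤ Jid p K θ γ i) ∧
    p ^ (2 * i + 3 - p) ≤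
      ((Jid p K θ γ i).toAddSubgroup).relIndex ((pid p K θ ^ i : Ideal (𝒪 p K)).toAddSubgroup) := by
  have hp : p.Prime := Fact.out
  have hθ' : IsPrimitiveRoot θ p :=
    hθ.of_map_of_injective (f := (𝒪 p K).val) Subtype.val_injective
  have : FiniteDimensional ℚ_[p] K := Algebra.finiteDimensional_of_adjoin_singleton_eq_top
    ((hθ.isIntegral hp.pos).tower_top) hgen
  obtain ⟨m, hm⟩ := PadicInt.exists_natCast_pow_mem p hJ
  refine ⟨⟨m, ?_⟩, ?_⟩
  · calc Wid p K θ γ i (m + 1) ≤ pid p K θ ^ (i + (p - 1) * m) :=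
          Wid_le_pid_pow hθ' hγi (by omega) m
      _ = span {(p : 𝒪 p K) ^ m} * pid p K θ ^ i := pid_pow_add_mul hθ' i m
      _ ≤ Jid p K θ γ i := Ideal.mul_le_left.trans ((span_singleton_le_iff_mem _).mpr hm)
  · have : Finite (𝒪 p K ⧸ (Jid p K θ γ i).toAddSubgroup) :=
      Ring.HasFiniteQuotients.finiteQuotient hJ
    exact Ideal.pow_le_relIndex_span_pow_add hp (hθ'.sub_one_dvd_natCast hp.one_lt)
      (not_isUnit_sub_one p K hθ') (hθ'.sub_one_ne_zero hp.one_lt) i _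
      (Jid_le_pid_pow hθ' hγi)
      (mt AddSubgroup.index_eq_zero_of_relIndex_eq_zero AddSubgroup.index_ne_zero_of_finite)

end MaximalClassFrame
end

section
/- Let γ ∈ H and let i ∈ ℕ₀. Then for every k ≥ 1 one has W_k(i+(p−1)) = p^k·W_k(i), and J_{i+(p−1)}(γ) = p³·J_i(γ). -/
set_option synthInstance.maxHeartbeats 1000000
set_option maxHeartbeats 1000000

namespace MaximalClassFrame

variable (p : ℕ) [Fact p.Prime]
variable (K : Type) [Field K] [Algebra ℚ_[p] K] [Algebra ℤ_[p] K]
  [IsScalarTower ℤ_[p] ℚ_[p] K]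

variable (θ : 𝒪 p K)

variable (γ : 𝒪 p K →ₗ[ℤ_[p]] 𝒪 p K →ₗ[ℤ_[p]] 𝒪 p K)

/-!
Since `(θ - 1)^(p-1)` is associated to `p` (the product of the `1 - η` over the primitive `p`-th
roots `η` is `Φ_p(1) = p`, and each `1 - η` is a unit multiple of `1 - θ`), we have
`𝔭^(i+p-1) = p • 𝔭^i`. An integer scalar passes through any bilinear map, so each of the `k`
arguments of the iterated brackets generating `W_k` contributes a factor `p`, and the three
arguments of the Jacobi expression contribute `p³`.
-/

open Pointwise Polynomial

theorem _root_.IsPrimitiveRoot.associated_sub_one_pow_sub_one_prime {p : ℕ} [Fact p.Prime]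
    {A : Type*} [CommRing A] [IsDomain A] {ζ : A} (hζ : IsPrimitiveRoot ζ p) :
    Associated ((ζ - 1) ^ (p - 1)) (p : A) := by
  rw [← eval_one_cyclotomic_prime (R := A) (p := p), cyclotomic_eq_prod_X_sub_primitiveRoots hζ,
    eval_prod]
  simp only [eval_sub, eval_X, eval_C]
  rw [← Nat.totient_prime Fact.out, ← hζ.card_primitiveRoots, ← Finset.prod_const]
  refine Associated.prod _ _ _ fun η hη ↦ ?_
  obtain ⟨j, -, hj, rfl⟩ :=
    hζ.isPrimitiveRoot_iff.mp (isPrimitiveRoot_of_mem_primitiveRoots hη)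
  simpa using (hζ.associated_sub_one_pow_sub_one_of_coprime hj).neg_right

theorem _root_.IsPrimitiveRoot.span_sub_one_pow_add_sub_one {p : ℕ} [Fact p.Prime] {A : Type*}
    [CommRing A] [IsDomain A] {ζ : A} (hζ : IsPrimitiveRoot ζ p) (i : ℕ) :
    Ideal.span {ζ - 1} ^ (i + (p - 1)) = (p : A) • Ideal.span {ζ - 1} ^ i := by
  rw [pow_add, Ideal.span_singleton_pow _ (p - 1), Ideal.span_singleton_eq_span_singleton.mpr
    hζ.associated_sub_one_pow_sub_one_prime, ← Submodule.ideal_span_singleton_smul, smul_eq_mul,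
    mul_comm]

section Bracket

variable {S R : Type*} [CommSemiring S] [CommRing R] [Module S R] (B : R →ₗ[S] R →ₗ[S] R)

lemma map_natCast_mul_left (n : ℕ) (x y : R) : B (n * x) y = n * B x y := by
  rw [← nsmul_eq_mul, map_nsmul, LinearMap.smul_apply, nsmul_eq_mul]

lemma map_natCast_mul_right (n : ℕ) (x y : R) : B x (n * y) = n * B x y := by
  rw [← nsmul_eq_mul, map_nsmul, nsmul_eq_mul]

def bracketIdeal (I J : Ideal R) : Ideal R :=
  Ideal.span (Set.image2 (fun x y => B x y) (I : Set R) (J : Set R))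

lemma bracketIdeal_natCast_smul (m n : ℕ) (I J : Ideal R) :
    bracketIdeal B ((m : R) • I) ((n : R) • J) = ((m : R) * n) • bracketIdeal B I J := by
  have : Set.image2 (fun x y => B x y) ((m : R) • (I : Set R)) ((n : R) • (J : Set R)) =
      ((m : R) * n) • Set.image2 (fun x y => B x y) (I : Set R) (J : Set R) := by
    simp only [← Set.image_smul, Set.image2_image_left, Set.image2_image_right, Set.image_image2,
      smul_eq_mul, map_natCast_mul_left, map_natCast_mul_right]
    exact Set.image2_congr fun a _ b _ => by ring
  rw [bracketIdeal, bracketIdeal, Submodule.coe_pointwise_smul, Submodule.coe_pointwise_smul, this,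
    Submodule.smul_span]

def jacobiator (x y z : R) : R := B (B x y) z + B (B y z) x + B (B z x) y

lemma jacobiator_natCast_mul (n : ℕ) (x y z : R) :
    jacobiator B (n * x) (n * y) (n * z) = (n : R) ^ 3 * jacobiator B x y z := by
  simp only [jacobiator, map_natCast_mul_left, map_natCast_mul_right]
  ring

def jacobiIdeal (I : Ideal R) : Ideal R :=
  Ideal.span {v | ∃ x ∈ I, ∃ y ∈ I, ∃ z ∈ I, v = jacobiator B x y z}

lemma jacobiIdeal_natCast_smul (n : ℕ) (I : Ideal R) :
    jacobiIdeal B ((n : R) • I) = (n : R) ^ 3 • jacobiIdeal B I := by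
  rw [jacobiIdeal, jacobiIdeal, Submodule.smul_span]
  congr 1
  ext v
  simp only [Submodule.mem_smul_pointwise_iff_exists, Set.mem_smul_set, Set.mem_ofPred_eq,
    smul_eq_mul]
  constructor
  · rintro ⟨_, ⟨x, hx, rfl⟩, _, ⟨y, hy, rfl⟩, _, ⟨z, hz, rfl⟩, rfl⟩
    exact ⟨_, ⟨x, hx, y, hy, z, hz, rfl⟩, (jacobiator_natCast_mul B n x y z).symm⟩
  · rintro ⟨_, ⟨x, hx, y, hy, z, hz, rfl⟩, rfl⟩
    exact ⟨_, ⟨x, hx, rfl⟩, _, ⟨y, hy, rfl⟩, _, ⟨z, hz, rfl⟩,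
      (jacobiator_natCast_mul B n x y z).symm⟩

end Bracket

omit [Algebra ℚ_[p] K] [IsScalarTower ℤ_[p] ℚ_[p] K] in
lemma pid_pow_add_sub_one (hθ : IsPrimitiveRoot (θ : K) p) (i : ℕ) :
    pid p K θ ^ (i + (p - 1)) = (p : 𝒪 p K) • pid p K θ ^ i :=
  (IsPrimitiveRoot.coe_submonoidClass_iff.mp hθ).span_sub_one_pow_add_sub_one i

omit [Algebra ℚ_[p] K] [IsScalarTower ℤ_[p] ℚ_[p] K] in
lemma Wid_add_two (i k : ℕ) :
    Wid p K θ γ i (k + 2) = bracketIdeal γ (Wid p K θ γ i (k + 1)) (pid p K θ ^ i) := by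
  rw [Wid]
  rfl

omit [Algebra ℚ_[p] K] [IsScalarTower ℤ_[p] ℚ_[p] K] in
lemma Wid_add_sub_one (hθ : IsPrimitiveRoot (θ : K) p) (i k : ℕ) :
    Wid p K θ γ (i + (p - 1)) (k + 1) = (p : 𝒪 p K) ^ (k + 1) • Wid p K θ γ i (k + 1) := by
  induction k with
  | zero => simpa [Wid] using pid_pow_add_sub_one p K θ hθ i
  | succ k ih =>
    rw [Wid_add_two, Wid_add_two, ih, pid_pow_add_sub_one p K θ hθ, ← Nat.cast_pow,
      bracketIdeal_natCast_smul, Nat.cast_pow, ← pow_succ]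

open Pointwise in
theorem frame_W_J_periodicity (hθ : IsPrimitiveRoot (θ : K) p) (i : ℕ) :
    (∀ k : ℕ, 1 ≤ k →
      Wid p K θ γ (i + (p - 1)) k = ((p : 𝒪 p K) ^ k) • Wid p K θ γ i k) ∧
    Jid p K θ γ (i + (p - 1)) = ((p : 𝒪 p K) ^ 3) • Jid p K θ γ i := by
  refine ⟨fun k hk => ?_, ?_⟩
  · obtain ⟨k, rfl⟩ := Nat.exists_eq_add_of_le' hk
    exact Wid_add_sub_one p K θ γ hθ i k
  · change jacobiIdeal γ _ = _ • jacobiIdeal γ _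
    rw [pid_pow_add_sub_one p K θ hθ]
    exact jacobiIdeal_natCast_smul γ p _

end MaximalClassFrame
end

section
/- Let i > p+1, let m ≥ i be an integer, let u be a unit of O, let σ be a ℚ_p-algebra automorphism of K, and let γ = Σ_a c_a·ϑ_a and γ' = Σ_a c_a'·ϑ_a be elements of Ĥ_i (with c_a, c_a' ∈ K, the sums over 2 ≤ a ≤ (p−1)/2). Suppose σ(c_a') − ρ_a(u)·c_a ∈ 𝔭^m for all 2 ≤ a ≤ (p−1)/2, where ρ_a(u) = u^{−1}·σ_a(u)·σ_{1−a}(u). Then there exists a ℤ_p-linear bijection f : 𝔭^i → 𝔭^i with f(𝔭^m) = 𝔭^m such that γ(f(x), f(y)) ≡ f(γ'(x, y)) (mod 𝔭^m) for all x, y ∈ 𝔭^i; hence the quotients 𝔭^i/𝔭^m equipped with the brackets induced by γ and by γ' are isomorphic as ℤ_p-algebras under the bracket multiplication. -/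
set_option synthInstance.maxHeartbeats 1000000
set_option maxHeartbeats 1000000

namespace MaximalClassFrame

variable (p : ℕ) [Fact p.Prime]
variable (K : Type) [Field K] [Algebra ℚ_[p] K] [Algebra ℤ_[p] K]
  [IsScalarTower ℤ_[p] ℚ_[p] K]

variable (θ : 𝒪 p K)

variable (σ : ℤ → (K →ₐ[ℚ_[p]] K))

/-- The restriction of a `ℤ_p`-algebra endomorphism of `K` to the maximal order. -/
noncomputable def oMap (ψ : K →ₐ[ℤ_[p]] K) : 𝒪 p K →ₐ[ℤ_[p]] 𝒪 p K :=
  AlgHom.codRestrict (ψ.comp (𝒪 p K).val) (𝒪 p K) (fun x => IsIntegral.map ψ x.2)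

@[simp] lemma oMap_coe (ψ : K →ₐ[ℤ_[p]] K) (x : 𝒪 p K) : (oMap p K ψ x : K) = ψ x := rfl

lemma dvd_oMap (hθ : IsPrimitiveRoot (θ:K) p) (ψ : K ≃ₐ[ℚ_[p]] K) :
    (θ - 1 : 𝒪 p K) ∣ oMap p K (ψ.toAlgHom.restrictScalars ℤ_[p]) (θ - 1) := by
  have : NeZero p := ⟨(Fact.out : p.Prime).ne_zero⟩
  have hpow : (ψ (θ:K)) ^ p = 1 := by rw [← map_pow, hθ.pow_eq_one, map_one]
  obtain ⟨j, hjp, hj⟩ := hθ.eq_pow_of_pow_eq_one hpow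
  refine ⟨∑ t ∈ Finset.range j, θ ^ t, ?_⟩
  apply Subtype.ext
  push_cast
  rw [mul_comm, geom_sum_mul]
  show (ψ : K →ₐ[ℚ_[p]] K) ((θ:K) - 1) = _
  rw [map_sub, map_one]
  simp [hj]

lemma comm_lemma (hθ : IsPrimitiveRoot (θ:K) p)
    (hgen : Algebra.adjoin ℚ_[p] {(θ:K)} = ⊤)
    (τ : K ≃ₐ[ℚ_[p]] K) (φ : K →ₐ[ℚ_[p]] K) (b : ℤ) (hφ : φ (θ:K) = (θ:K) ^ b) (x : K) :
    φ (τ x) = τ (φ x) := by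
  have : NeZero p := ⟨(Fact.out : p.Prime).ne_zero⟩
  have hpow : (τ (θ:K)) ^ p = 1 := by rw [← map_pow, hθ.pow_eq_one, map_one]
  obtain ⟨j, hjp, hj⟩ := hθ.eq_pow_of_pow_eq_one hpow
  have key : φ.comp τ.toAlgHom = (τ.toAlgHom : K →ₐ[ℚ_[p]] K).comp φ := by
    apply AlgHom.ext_of_adjoin_eq_top hgen
    intro y hy
    rcases Set.eq_of_mem_singleton hy with rfl
    simp only [AlgHom.coe_comp, Function.comp_apply, AlgEquiv.toAlgHom_eq_coe,
      AlgEquiv.coe_algHom]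
    show φ (τ (θ:K)) = τ (φ (θ:K))
    rw [← hj, map_pow, hφ, map_zpow₀, ← hj]
    rw [← zpow_natCast ((θ:K) ^ b) j, ← zpow_natCast (θ:K) j, ← zpow_mul, ← zpow_mul, mul_comm]
  exact DFunLike.congr_fun key x

/-- Let `i > p+1`, `m ≥ i`, `u` a unit of `𝒪`, `τ` a `ℚ_p`-algebra
automorphism of `K`, and let `γ = Σ c_a ϑ_a`, `γ' = Σ c_a' ϑ_a` be in `Ĥ_i` with
`τ(c_a') − ρ_a(u)·c_a ∈ 𝔭^m` for all `a`, where `ρ_a(u) = u⁻¹σ_a(u)σ_{1−a}(u)`.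
Then there is a `ℤ_p`-linear bijection `f` of `𝔭^i` with `f(𝔭^m) = 𝔭^m` and
`γ(f(x), f(y)) ≡ f(γ'(x, y)) (mod 𝔭^m)` for all `x, y ∈ 𝔭^i`. -/
theorem frame_isomorphism_criterion (hp : 5 ≤ p) (hθ : IsPrimitiveRoot (θ : K) p)
    (hgen : Algebra.adjoin ℚ_[p] {(θ : K)} = ⊤)
    (hσ : ∀ j : ℤ, ¬ ((p : ℤ) ∣ j) → σ j (θ : K) = (θ : K) ^ j)
    (i m : ℕ) (hi : p + 1 < i) (him : i ≤ m)
    (u : 𝒪 p K) (hu : IsUnit u) (τ : K ≃ₐ[ℚ_[p]] K)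
    (c c' : ℕ → K)
    (γ γ' : 𝒪 p K →ₗ[ℤ_[p]] 𝒪 p K →ₗ[ℤ_[p]] 𝒪 p K)
    (hγ : IsPEquivariant p K θ γ) (hγ' : IsPEquivariant p K θ γ')
    (hγc : ∀ x y : 𝒪 p K, ((γ x y : 𝒪 p K) : K)
      = ∑ a ∈ Finset.Icc 2 ((p - 1) / 2), c a * thetaMap p K σ (a : ℤ) (x : K) (y : K))
    (hγc' : ∀ x y : 𝒪 p K, ((γ' x y : 𝒪 p K) : K)
      = ∑ a ∈ Finset.Icc 2 ((p - 1) / 2), c' a * thetaMap p K σ (a : ℤ) (x : K) (y : K))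
    (hγi : InHhat p K θ i γ) (hγi' : InHhat p K θ i γ')
    (hcong : ∀ a ∈ Finset.Icc 2 ((p - 1) / 2),
      ∃ z ∈ pid p K θ ^ m, (z : K) =
        τ (c' a) - ((u : K)⁻¹ * σ (a : ℤ) (u : K) * σ (1 - (a : ℤ)) (u : K)) * c a) :
    ∃ f : 𝒪 p K →ₗ[ℤ_[p]] 𝒪 p K,
      Set.BijOn f ((pid p K θ ^ i : Ideal (𝒪 p K)) : Set (𝒪 p K))
        ((pid p K θ ^ i : Ideal (𝒪 p K)) : Set (𝒪 p K)) ∧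
      f '' ((pid p K θ ^ m : Ideal (𝒪 p K)) : Set (𝒪 p K))
        = ((pid p K θ ^ m : Ideal (𝒪 p K)) : Set (𝒪 p K)) ∧
      ∀ x ∈ pid p K θ ^ i, ∀ y ∈ pid p K θ ^ i,
        γ (f x) (f y) - f (γ' x y) ∈ pid p K θ ^ m := by
  classical
  have hNZ : NeZero p := ⟨(Fact.out : p.Prime).ne_zero⟩
  set T : 𝒪 p K →ₐ[ℤ_[p]] 𝒪 p K :=
    oMap p K (τ.toAlgHom.restrictScalars ℤ_[p]) with hT
  set T' : 𝒪 p K →ₐ[ℤ_[p]] 𝒪 p K :=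
    oMap p K (τ.symm.toAlgHom.restrictScalars ℤ_[p]) with hT'
  have hTcoe : ∀ x : 𝒪 p K, (T x : K) = τ (x : K) := fun x => rfl
  have hT'coe : ∀ x : 𝒪 p K, (T' x : K) = τ.symm (x : K) := fun x => rfl
  have hTT' : ∀ x, T (T' x) = x := by
    intro x; apply Subtype.ext; rw [hTcoe, hT'coe, AlgEquiv.apply_symm_apply]
  -- the linear map f
  set f : 𝒪 p K →ₗ[ℤ_[p]] 𝒪 p K := (LinearMap.mulLeft ℤ_[p] u) ∘ₗ T.toLinearMap with hfdef
  have hf : ∀ x, f x = u * T x := fun x => rfl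
  -- basic unit facts
  have hune : (u : K) ≠ 0 := by
    obtain ⟨v, hv⟩ := hu.exists_right_inv
    have hvK : (u : K) * (v : K) = 1 := by
      have := congrArg (Subtype.val) hv
      push_cast at this
      exact this
    exact left_ne_zero_of_mul_eq_one hvK
  -- divisibility facts
  have hd1 : (θ - 1 : 𝒪 p K) ∣ T (θ - 1) := dvd_oMap p K θ hθ τ
  have hd1' : (θ - 1 : 𝒪 p K) ∣ T' (θ - 1) := dvd_oMap p K θ hθ τ.symm
  have hmem : ∀ (k : ℕ) (x : 𝒪 p K), x ∈ pid p K θ ^ k ↔ (θ - 1) ^ k ∣ x := by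
    intro k x
    rw [pid, Ideal.span_singleton_pow, Ideal.mem_span_singleton]
  have hfwd : ∀ (k : ℕ) (x : 𝒪 p K), x ∈ pid p K θ ^ k → f x ∈ pid p K θ ^ k := by
    intro k x hx
    rw [hmem] at hx ⊢
    rw [hf]
    refine Dvd.dvd.mul_left ?_ u
    calc (θ - 1 : 𝒪 p K) ^ k ∣ (T (θ - 1)) ^ k := pow_dvd_pow_of_dvd hd1 k
    _ = T ((θ - 1) ^ k) := (map_pow T _ k).symm
    _ ∣ T x := map_dvd T hx
  have hbwd : ∀ (k : ℕ) (y : 𝒪 p K), y ∈ pid p K θ ^ k →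
      ∃ x, x ∈ pid p K θ ^ k ∧ f x = y := by
    intro k y hy
    refine ⟨T' (↑hu.unit⁻¹ * y), ?_, ?_⟩
    · rw [hmem] at hy ⊢
      calc (θ - 1 : 𝒪 p K) ^ k ∣ (T' (θ - 1)) ^ k := pow_dvd_pow_of_dvd hd1' k
      _ = T' ((θ - 1) ^ k) := (map_pow T' _ k).symm
      _ ∣ T' (↑hu.unit⁻¹ * y) := map_dvd T' (hy.mul_left _)
    · rw [hf, hTT', ← mul_assoc]
      have : u * ↑hu.unit⁻¹ = 1 := by
        simpa using hu.unit.mul_inv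
      rw [this, one_mul]
  have hinj : Function.Injective f := by
    intro x y hxy
    rw [hf, hf] at hxy
    have h2 := hu.mul_left_cancel hxy
    have h3 : τ (x : K) = τ (y : K) := by rw [← hTcoe, ← hTcoe, h2]
    exact Subtype.ext (τ.injective h3)
  refine ⟨f, ⟨fun x hx => hfwd i x hx, hinj.injOn, fun y hy => ?_⟩, ?_, ?_⟩
  · obtain ⟨x, hx, hfx⟩ := hbwd i y hy
    exact ⟨x, hx, hfx⟩
  · apply Set.Subset.antisymm
    · rintro _ ⟨x, hx, rfl⟩; exact hfwd m x hx
    · intro y hy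
      obtain ⟨x, hx, hfx⟩ := hbwd m y hy
      exact ⟨x, hx, hfx⟩
  -- the congruence
  intro x hx y hy
  -- arithmetic facts about the exponents
  have hplt : (p - 1) / 2 < p := by omega
  have hpa : ∀ a ∈ Finset.Icc 2 ((p - 1) / 2),
      ¬ ((p : ℤ) ∣ (a : ℤ)) ∧ ¬ ((p : ℤ) ∣ (1 - (a : ℤ))) := by
    intro a ha
    rw [Finset.mem_Icc] at ha
    constructor
    · intro hdvd
      have h1 : (p : ℤ) ≤ (a : ℤ) := Int.le_of_dvd (by exact_mod_cast by omega) hdvd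
      have : a < p := lt_of_le_of_lt ha.2 hplt
      omega
    · intro hdvd
      have hdvd' : (p : ℤ) ∣ ((a : ℤ) - 1) := by
        have := hdvd.neg_right
        simpa using this
      have h1 : (p : ℤ) ≤ (a : ℤ) - 1 := Int.le_of_dvd (by
        have : 2 ≤ a := ha.1; omega) hdvd'
      have : a < p := lt_of_le_of_lt ha.2 hplt
      omega
  -- commutation of σ's with τ
  have hcomm : ∀ (b : ℤ), ¬ ((p : ℤ) ∣ b) → ∀ v : K, σ b (τ v) = τ (σ b v) :=
    fun b hb v => comm_lemma p K θ hθ hgen τ (σ b) b (hσ b hb) v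
  -- membership facts
  have hσmem : ∀ (b : ℤ) (v : K), v ∈ 𝒪 p K → σ b v ∈ 𝒪 p K :=
    fun b v hv => IsIntegral.map ((σ b).restrictScalars ℤ_[p]) hv
  have hτmem : ∀ v : K, v ∈ 𝒪 p K → τ v ∈ 𝒪 p K :=
    fun v hv => IsIntegral.map (τ.toAlgHom.restrictScalars ℤ_[p]) hv
  have hθmemK : ∀ (a : ℤ) (w w' : 𝒪 p K), thetaMap p K σ a (w : K) (w' : K) ∈ 𝒪 p K := by
    intro a w w'
    exact sub_mem (mul_mem (hσmem _ _ w.2) (hσmem _ _ w'.2))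
      (mul_mem (hσmem _ _ w.2) (hσmem _ _ w'.2))
  -- the auxiliary function g
  set g : ℕ → K := fun a =>
    (-(u : K)) * (τ (c' a) - ((u : K)⁻¹ * σ (a : ℤ) (u : K) * σ (1 - (a : ℤ)) (u : K)) * c a)
      * τ (thetaMap p K σ (a : ℤ) (x : K) (y : K)) with hg
  -- Claim 1: the coercion of the difference equals the sum of g
  have claim1 : ((γ (f x) (f y) - f (γ' x y) : 𝒪 p K) : K)
      = ∑ a ∈ Finset.Icc 2 ((p - 1) / 2), g a := by
    have hfxK : ((f x : 𝒪 p K) : K) = (u : K) * τ (x : K) := rfl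
    have hfyK : ((f y : 𝒪 p K) : K) = (u : K) * τ (y : K) := rfl
    have hfγK : ((f (γ' x y) : 𝒪 p K) : K) = (u : K) * τ ((γ' x y : 𝒪 p K) : K) := rfl
    push_cast
    rw [hγc, hfγK, hγc' x y, map_sum, Finset.mul_sum, ← Finset.sum_sub_distrib]
    apply Finset.sum_congr rfl
    intro a ha
    obtain ⟨hpa1, hpa2⟩ := hpa a ha
    rw [hg]
    simp only [thetaMap, hfxK, hfyK]
    rw [map_mul (σ (a:ℤ)), map_mul (σ (1-(a:ℤ))), map_mul (σ (a:ℤ)), map_mul (σ (1-(a:ℤ)))]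
    rw [hcomm _ hpa1 (x:K), hcomm _ hpa2 (y:K), hcomm _ hpa2 (x:K), hcomm _ hpa1 (y:K)]
    rw [map_sub τ, map_mul τ, map_mul τ, map_sub τ, map_mul τ, map_mul τ]
    field_simp
    ring
  -- Claim 2: each g a is the coercion of an element of 𝔭^m
  have claim2 : ∀ a ∈ Finset.Icc 2 ((p - 1) / 2),
      ∃ w ∈ pid p K θ ^ m, (w : K) = g a := by
    intro a ha
    obtain ⟨z, hz, hzK⟩ := hcong a ha
    refine ⟨(-u * ⟨τ (thetaMap p K σ (a:ℤ) (x:K) (y:K)), hτmem _ (hθmemK _ x y)⟩) * z,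
      Ideal.mul_mem_left _ _ hz, ?_⟩
    push_cast
    rw [hzK, hg]
    ring
  choose w hw1 hw2 using claim2
  have hsum : (γ (f x) (f y) - f (γ' x y) : 𝒪 p K)
      = ∑ a ∈ (Finset.Icc 2 ((p - 1) / 2)).attach, w a a.2 := by
    apply Subtype.ext
    rw [claim1, ← Finset.sum_attach (Finset.Icc 2 ((p - 1) / 2)) g]
    push_cast
    exact Finset.sum_congr rfl (fun a _ => (hw2 a a.2).symm)
  rw [hsum]
  exact Ideal.sum_mem _ (fun a _ => hw1 a a.2)

end MaximalClassFrame
end
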